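/- arXiv:1510.07000 — 7 statements merged into one kernel-verified Lean document; each statement's English description precedes it below -/
import Mathlib

section
/- Let F_{q'} be a finite field whose characteristic is not 2 or 3 and which contains F_{p^2} (i.e., q' = p^{2m} for the characteristic p). Let a, b ∈ F_{q'} and suppose the homogeneous quadratic form F(x,y,z) = 2(x^2 + y^2 + xy - axz - ayz) + (a^2 - b)z^2 factors as a product of two linear forms over the algebraic closure of F_{q'}. Then F factors as a product of two linear forms with coefficients in F_{q'}. -/
/-!
Comparing coefficients in `F = ℓ₁ ℓ₂` shows that the Gram matrix of `F`, whose determinant is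
`8 (a² - 3b)`, has rank at most two, so `a² = 3b`. Conversely, when
`a² = 3b` the form splits over any field containing a square root `s` of `-3`, because
`x² + xy + y² = ((2x + y)² - (s y)²) / 4`. Finally `-3` lies in `𝔽_p`, and every element of `𝔽_p`
is a square in `𝔽_{p²} ⊆ F`: for `p ∤ n` one has `n ^ (p - 1) = 1` and `p - 1 ∣ (|F| - 1) / 2`.
-/

open MvPolynomial

namespace TernaryForm

variable {R : Type*} [CommRing R]

noncomputable def quadForm (a b : R) : MvPolynomial (Fin 3) R :=
  C 2 * (X 0 ^ 2 + X 1 ^ 2 + X 0 * X 1 - C a * X 0 * X 2 - C a * X 1 * X 2) + C (a ^ 2 - b) * X 2 ^ 2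

noncomputable def linForm (c0 c1 c2 : R) : MvPolynomial (Fin 3) R :=
  C c0 * X 0 + C c1 * X 1 + C c2 * X 2

def IsProductOfLinearForms (P : MvPolynomial (Fin 3) R) : Prop :=
  ∃ c0 c1 c2 d0 d1 d2 : R, P = linForm c0 c1 c2 * linForm d0 d1 d2

theorem map_quadForm {S : Type*} [CommRing S] (f : R →+* S) (a b : R) :
    MvPolynomial.map f (quadForm a b) = quadForm (f a) (f b) := by
  simp [quadForm, map_ofNat]

theorem eval_quadForm (v : Fin 3 → R) (a b : R) :
    eval v (quadForm a b) = 2 * (v 0 ^ 2 + v 1 ^ 2 + v 0 * v 1 - a * v 0 * v 2 - a * v 1 * v 2)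
      + (a ^ 2 - b) * v 2 ^ 2 := by
  simp [quadForm, map_ofNat]

theorem eval_linForm (v : Fin 3 → R) (c0 c1 c2 : R) :
    eval v (linForm c0 c1 c2) = c0 * v 0 + c1 * v 1 + c2 * v 2 := by
  simp [linForm]

theorem linForm_mul_linForm (c0 c1 c2 d0 d1 d2 : R) :
    linForm c0 c1 c2 * linForm d0 d1 d2 =
      C (c0 * d0) * X 0 ^ 2 + C (c1 * d1) * X 1 ^ 2 + C (c2 * d2) * X 2 ^ 2
        + C (c0 * d1 + c1 * d0) * (X 0 * X 1) + C (c0 * d2 + c2 * d0) * (X 0 * X 2)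
        + C (c1 * d2 + c2 * d1) * (X 1 * X 2) := by
  simp only [linForm, map_mul, map_add]
  ring

theorem quadForm_eq_linForm_mul_iff {a b c0 c1 c2 d0 d1 d2 : R} :
    quadForm a b = linForm c0 c1 c2 * linForm d0 d1 d2 ↔
      c0 * d0 = 2 ∧ c1 * d1 = 2 ∧ c2 * d2 = a ^ 2 - b ∧ c0 * d1 + c1 * d0 = 2 ∧
        c0 * d2 + c2 * d0 = -(2 * a) ∧ c1 * d2 + c2 * d1 = -(2 * a) := by
  constructor
  · intro h
    have ev (v : Fin 3 → R) := congrArg (eval v) h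
    simp only [eval_quadForm, eval_linForm, map_mul] at ev
    have h0 := ev ![1, 0, 0]
    have h1 := ev ![0, 1, 0]
    have h2 := ev ![0, 0, 1]
    have h01 := ev ![1, 1, 0]
    have h02 := ev ![1, 0, 1]
    have h12 := ev ![0, 1, 1]
    simp only [Matrix.cons_val_zero, Matrix.cons_val_one, Matrix.cons_val, one_pow, ne_eq,
      OfNat.ofNat_ne_zero, not_false_eq_true, zero_pow, add_zero, zero_add, mul_zero, mul_one,
      sub_zero, sub_self] at h0 h1 h2 h01 h02 h12
    exact ⟨by linear_combination -h0, by linear_combination -h1, by linear_combination -h2,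
      by linear_combination -h01 + h0 + h1, by linear_combination -h02 + h0 + h2,
      by linear_combination -h12 + h1 + h2⟩
  · rintro ⟨h0, h1, h2, h01, h02, h12⟩
    rw [linForm_mul_linForm, h0, h1, h2, h01, h02, h12, quadForm]
    simp only [map_neg, map_mul, map_sub, map_pow, map_ofNat]
    ring

theorem gram_det_of_product_eq_zero (c0 c1 c2 d0 d1 d2 : R) :
    8 * (c0 * d0) * (c1 * d1) * (c2 * d2)
      + 2 * (c0 * d1 + c1 * d0) * (c0 * d2 + c2 * d0) * (c1 * d2 + c2 * d1)
      - 2 * (c0 * d0) * (c1 * d2 + c2 * d1) ^ 2 - 2 * (c1 * d1) * (c0 * d2 + c2 * d0) ^ 2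
      - 2 * (c2 * d2) * (c0 * d1 + c1 * d0) ^ 2 = 0 := by
  ring

theorem sq_eq_three_mul_of_isProductOfLinearForms [IsDomain R] {a b : R} (h2 : (2 : R) ≠ 0)
    (h : IsProductOfLinearForms (quadForm a b)) : a ^ 2 = 3 * b := by
  obtain ⟨c0, c1, c2, d0, d1, d2, h⟩ := h
  obtain ⟨e0, e1, e2, e01, e02, e12⟩ := quadForm_eq_linForm_mul_iff.mp h
  have hdet := gram_det_of_product_eq_zero c0 c1 c2 d0 d1 d2
  rw [e0, e1, e2, e01, e02, e12] at hdet
  have h8 : (2 : R) ^ 3 * (a ^ 2 - 3 * b) = 0 := by linear_combination hdet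
  exact sub_eq_zero.mp ((mul_eq_zero.mp h8).resolve_left (pow_ne_zero 3 h2))

theorem isProductOfLinearForms_quadForm {K : Type*} [Field K] {a b s : K} (h2 : (2 : K) ≠ 0)
    (h3 : (3 : K) ≠ 0) (hs : s ^ 2 = -3) (hab : a ^ 2 = 3 * b) :
    IsProductOfLinearForms (quadForm a b) := by
  have hs0 : s ≠ 0 := by rintro rfl; exact h3 (by linear_combination hs)
  refine ⟨2, 1 - s, -(a * (1 + s) / s), 1, (1 + s) / 2, -(a * (s - 1) / (2 * s)), ?_⟩
  refine quadForm_eq_linForm_mul_iff.mpr ⟨by ring, ?_, ?_, ?_, ?_, ?_⟩ <;> field_simp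
  · linear_combination -hs
  · linear_combination (2 * b - a ^ 2) * hs + 2 * hab
  all_goals ring

end TernaryForm

open TernaryForm

theorem Nat.exists_pow_two_mul_div_two_eq {p : ℕ} (hp : Odd p) (m : ℕ) :
    ∃ k, p ^ (2 * m) / 2 = (p - 1) * k := by
  obtain ⟨r, hr⟩ : p ^ 2 - 1 ∣ p ^ (2 * m) - 1 := by
    simpa only [one_pow, pow_mul] using Nat.sub_dvd_pow_sub_pow (p ^ 2) 1 m
  obtain ⟨j, rfl⟩ := hp
  have hsq : (2 * j + 1) ^ 2 - 1 = 2 * (2 * j * (j + 1)) := Nat.sub_eq_of_eq_add (by ring)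
  have hpos : 1 ≤ (2 * j + 1) ^ (2 * m) := Nat.one_le_pow _ _ (by omega)
  refine ⟨(j + 1) * r, ?_⟩
  rw [hsq] at hr
  rw [Nat.add_sub_cancel]
  generalize ht : 2 * j * ((j + 1) * r) = t
  have : (2 * j + 1) ^ (2 * m) - 1 = 2 * t := by rw [hr, ← ht]; ring
  omega

theorem FiniteField.isSquare_intCast_of_card_eq_pow_two_mul {F : Type*} [Field F] [Fintype F]
    {p m : ℕ} [Fact p.Prime] [CharP F p] (hp2 : p ≠ 2) (hcard : Fintype.card F = p ^ (2 * m))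
    (n : ℤ) : IsSquare (n : F) := by
  rcases eq_or_ne (n : F) 0 with hn | hn
  · exact hn ▸ IsSquare.zero
  have hfrob : (n : F) ^ p = n := by rw [← frobenius_def, map_intCast]
  have hfermat : (n : F) ^ (p - 1) = 1 := by
    have hp1 : p = p - 1 + 1 := (Nat.succ_pred_eq_of_pos (Fact.out : p.Prime).pos).symm
    rw [hp1, pow_succ] at hfrob
    exact (mul_eq_right₀ hn).mp hfrob
  obtain ⟨k, hk⟩ := Nat.exists_pow_two_mul_div_two_eq ((Fact.out : p.Prime).odd_of_ne_two hp2) m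
  rw [FiniteField.isSquare_iff (by rwa [ringChar.eq F p]) hn, hcard, hk, pow_mul, hfermat, one_pow]

theorem CharP.natCast_ne_zero_of_lt (R : Type*) [AddMonoidWithOne R] (p : ℕ) [CharP R p] {n : ℕ}
    (h0 : n ≠ 0) (hn : n < p) : (n : R) ≠ 0 := fun h ↦
  (Nat.le_of_dvd (Nat.pos_of_ne_zero h0) ((CharP.cast_eq_zero_iff R p n).mp h)).not_gt hn

theorem stmt_2_general (p m : ℕ) (hp : p.Prime) (hp3 : 3 < p)
    (F : Type*) [Field F] [Fintype F] (hcard : Fintype.card F = p ^ (2 * m))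
    (a b : F)
    (hfac : ∃ c0 c1 c2 d0 d1 d2 : AlgebraicClosure F,
      MvPolynomial.map (algebraMap F (AlgebraicClosure F))
        ((C (2 : F) * (X 0 ^ 2 + X 1 ^ 2 + X 0 * X 1 - C a * X 0 * X 2 - C a * X 1 * X 2)
          + C (a ^ 2 - b) * X 2 ^ 2 : MvPolynomial (Fin 3) F))
        = (C c0 * X 0 + C c1 * X 1 + C c2 * X 2) *
            (C d0 * X 0 + C d1 * X 1 + C d2 * X 2)) :
    ∃ c0 c1 c2 d0 d1 d2 : F,
      (C (2 : F) * (X 0 ^ 2 + X 1 ^ 2 + X 0 * X 1 - C a * X 0 * X 2 - C a * X 1 * X 2)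
          + C (a ^ 2 - b) * X 2 ^ 2 : MvPolynomial (Fin 3) F)
        = (C c0 * X 0 + C c1 * X 1 + C c2 * X 2) *
            (C d0 * X 0 + C d1 * X 1 + C d2 * X 2) := by
  have := Fact.mk hp
  have := charP_of_card_eq_prime_pow hcard
  have h2 : (2 : F) ≠ 0 := by exact_mod_cast CharP.natCast_ne_zero_of_lt F p two_ne_zero (by omega)
  have h3 : (3 : F) ≠ 0 := by exact_mod_cast CharP.natCast_ne_zero_of_lt F p three_ne_zero hp3
  have hfac' : IsProductOfLinearForms (quadForm (algebraMap F (AlgebraicClosure F) a)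
      (algebraMap F (AlgebraicClosure F) b)) := by
    rw [← map_quadForm]; exact hfac
  have hab : a ^ 2 = 3 * b := by
    apply (algebraMap F (AlgebraicClosure F)).injective
    have h2' : (2 : AlgebraicClosure F) ≠ 0 := by
      rw [← map_ofNat (algebraMap F _)]; exact (map_ne_zero _).mpr h2
    rw [map_pow, map_mul, map_ofNat]
    exact sq_eq_three_mul_of_isProductOfLinearForms h2' hfac'
  obtain ⟨s, hs⟩ := FiniteField.isSquare_intCast_of_card_eq_pow_two_mul (by omega) hcard (-3)
  exact isProductOfLinearForms_quadForm h2 h3 (by rw [sq, ← hs]; push_cast; ring) hab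

/-- If the homogeneous quadratic form
`F(x,y,z) = 2(x² + y² + xy − axz − ayz) + (a² − b)z²` over a finite field of
cardinality `p^{2m}` (`p` prime, `p > 3`) factors as a product of two linear
forms over the algebraic closure, then it factors as a product of two linear
forms over the field itself. -/
theorem stmt_2 (p m : ℕ) (hp : p.Prime) (hp3 : 3 < p) (hm : 0 < m)
    (F : Type*) [Field F] [Fintype F] (hcard : Fintype.card F = p ^ (2 * m))
    (a b : F)
    (hfac : ∃ c0 c1 c2 d0 d1 d2 : AlgebraicClosure F,
      MvPolynomial.map (algebraMap F (AlgebraicClosure F))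
        ((C (2 : F) * (X 0 ^ 2 + X 1 ^ 2 + X 0 * X 1 - C a * X 0 * X 2 - C a * X 1 * X 2)
          + C (a ^ 2 - b) * X 2 ^ 2 : MvPolynomial (Fin 3) F))
        = (C c0 * X 0 + C c1 * X 1 + C c2 * X 2) *
            (C d0 * X 0 + C d1 * X 1 + C d2 * X 2)) :
    ∃ c0 c1 c2 d0 d1 d2 : F,
      (C (2 : F) * (X 0 ^ 2 + X 1 ^ 2 + X 0 * X 1 - C a * X 0 * X 2 - C a * X 1 * X 2)
          + C (a ^ 2 - b) * X 2 ^ 2 : MvPolynomial (Fin 3) F)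
        = (C c0 * X 0 + C c1 * X 1 + C c2 * X 2) *
            (C d0 * X 0 + C d1 * X 1 + C d2 * X 2) :=
  stmt_2_general p m hp hp3 F hcard a b hfac
end

section
/- Let p be an odd prime, q = p^h, and M0 a sufficiently large positive integer. Then there exists a Sidon set S in G_{4M0} = {f ∈ F_q[t] : deg f < 4M0} such that every g ∈ G_{4M0} can be written as g = s1 + s2 + s3 + s4 with s1, s2, s3, s4 ∈ S pairwise distinct. -/
/-! For a finite field `K` of odd order, the parabola `{(x, x²)}` in `K × K` is a Sidon set: `x - y`
and `x² - y²` determine `x + y`, hence `x` and `y`. If moreover `-1 = i²` in `K`, every `(A, B)` is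
the sum of the parabola points over `x = a ± u, a ± v` with `4a = A` and `u² + v² = c` for the
appropriate `c`. The solutions of `(u + iv)(u - iv) = c` are parametrized by `w = u + iv ≠ 0`, and
the four `x` are distinct unless `w⁸ = c⁴`, which excludes at most eight values of `w`. Taking
`|K| = q^(2M₀)`, the groups `K × K` and `G_{4M₀}` are `𝔽_p`-vector spaces of the same order, so
the parabola transports to `G_{4M₀}` along an additive isomorphism. -/

open Polynomial Function

section AddGroup

variable {G H : Type*} [AddGroup G] [AddGroup H]

def IsSidon (S : Set G) : Prop :=
  ∀ a ∈ S, ∀ b ∈ S, ∀ c ∈ S, ∀ d ∈ S, a - b = c - d → a - b ≠ 0 → a = c ∧ b = d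

def IsSumOfFourDistinct (S : Set G) (g : G) : Prop :=
  ∃ s1 ∈ S, ∃ s2 ∈ S, ∃ s3 ∈ S, ∃ s4 ∈ S,
    s1 ≠ s2 ∧ s1 ≠ s3 ∧ s1 ≠ s4 ∧ s2 ≠ s3 ∧ s2 ≠ s4 ∧ s3 ≠ s4 ∧ s1 + s2 + s3 + s4 = g

theorem IsSidon.image {S : Set G} (hS : IsSidon S) (f : G →+ H) (hf : Injective f) :
    IsSidon (f '' S) := by
  rintro _ ⟨a, ha, rfl⟩ _ ⟨b, hb, rfl⟩ _ ⟨c, hc, rfl⟩ _ ⟨d, hd, rfl⟩ h hne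
  rw [← map_sub, ← map_sub] at h
  rw [← map_sub, map_ne_zero_iff f hf] at hne
  obtain ⟨rfl, rfl⟩ := hS a ha b hb c hc d hd (hf h) hne
  exact ⟨rfl, rfl⟩

theorem IsSumOfFourDistinct.image {S : Set G} {g : G} (h : IsSumOfFourDistinct S g)
    (f : G →+ H) (hf : Injective f) : IsSumOfFourDistinct (f '' S) (f g) := by
  obtain ⟨s1, h1, s2, h2, s3, h3, s4, h4, h12, h13, h14, h23, h24, h34, rfl⟩ := h
  exact ⟨f s1, Set.mem_image_of_mem f h1, f s2, Set.mem_image_of_mem f h2,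
    f s3, Set.mem_image_of_mem f h3, f s4, Set.mem_image_of_mem f h4, hf.ne h12, hf.ne h13,
    hf.ne h14, hf.ne h23, hf.ne h24, hf.ne h34, by simp only [map_add]⟩

end AddGroup

def parabola (R : Type*) [Monoid R] : Set (R × R) :=
  Set.range fun x => (x, x ^ 2)

theorem isSidon_parabola {R : Type*} [CommRing R] [IsDomain R] (h2 : (2 : R) ≠ 0) :
    IsSidon (parabola R) := by
  rintro _ ⟨x, rfl⟩ _ ⟨y, rfl⟩ _ ⟨z, rfl⟩ _ ⟨t, rfl⟩ h hne
  simp only [Prod.mk_sub_mk, Prod.mk.injEq] at h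
  obtain ⟨hdiff, hdiff_sq⟩ := h
  have hxy : x - y ≠ 0 := fun h0 => hne (by
    rw [Prod.mk_sub_mk, h0, show x ^ 2 - y ^ 2 = (x - y) * (x + y) by ring, h0, zero_mul]; rfl)
  have hsum : x + y = z + t :=
    mul_left_cancel₀ hxy (by linear_combination hdiff_sq - (z + t) * hdiff)
  obtain rfl : x = z := mul_left_cancel₀ h2 (by linear_combination hdiff + hsum)
  obtain rfl : y = t := mul_left_cancel₀ h2 (by linear_combination hsum - hdiff)
  exact ⟨rfl, rfl⟩

theorem exists_ne_zero_pow_ne {R : Type*} [CommRing R] [IsDomain R] [Fintype R] {n : ℕ}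
    (hn : 0 < n) (hR : n + 1 < Fintype.card R) (a : R) : ∃ w : R, w ≠ 0 ∧ w ^ n ≠ a := by
  classical
  have hcard : (insert 0 (nthRootsFinset n a)).card < (Finset.univ : Finset R).card :=
    calc _ ≤ (nthRootsFinset n a).card + 1 := Finset.card_insert_le _ _
      _ ≤ n + 1 := by
        gcongr
        rw [nthRootsFinset_def]
        exact (Multiset.toFinset_card_le _).trans (card_nthRoots n a)
      _ < _ := by rwa [Finset.card_univ]
  obtain ⟨w, -, hw⟩ := Finset.exists_mem_notMem_of_card_lt_card hcard
  rw [Finset.mem_insert, mem_nthRootsFinset hn, not_or] at hw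
  exact ⟨w, hw⟩

section FiniteField

variable {K : Type*} [Field K] [Fintype K]

theorem exists_mul_eq_pow_four_ne (hK : 10 ≤ Fintype.card K) (c : K) :
    ∃ w z : K, w * z = c ∧ w ^ 4 ≠ z ^ 4 := by
  obtain ⟨w, hw0, hw⟩ := exists_ne_zero_pow_ne (n := 8) (by norm_num) (by omega) (c ^ 4)
  refine ⟨w, c / w, mul_div_cancel₀ c hw0, fun h => hw ?_⟩
  calc w ^ 8 = w ^ 4 * (c / w) ^ 4 := by rw [← h]; ring
    _ = c ^ 4 := by rw [← mul_pow, mul_div_cancel₀ c hw0]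

theorem exists_sq_add_sq_eq (hK : 10 ≤ Fintype.card K) (h2 : (2 : K) ≠ 0)
    (hneg : IsSquare (-1 : K)) (c : K) :
    ∃ u v : K, u * v * (u - v) * (u + v) ≠ 0 ∧ u ^ 2 + v ^ 2 = c := by
  obtain ⟨i, hi⟩ := hneg
  replace hi : i ^ 2 = -1 := by rw [sq, hi]
  have hi0 : i ≠ 0 := by rintro rfl; simp at hi
  obtain ⟨w, z, hwz, hwz4⟩ := exists_mul_eq_pow_four_ne hK c
  -- `u + i v = w` and `u - i v = z`, so that `u² + v² = w z`
  obtain ⟨u, hu⟩ : ∃ u, 2 * u = w + z := ⟨(w + z) / 2, mul_div_cancel₀ _ h2⟩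
  obtain ⟨v, hv⟩ : ∃ v, 2 * v = i * (z - w) := ⟨i * (z - w) / 2, mul_div_cancel₀ _ h2⟩
  have hprod : 16 * (u * v * (u - v) * (u + v)) = 2 * i * (z ^ 4 - w ^ 4) := by
    rw [show 16 * (u * v * (u - v) * (u + v)) = 2 * u * (2 * v) * ((2 * u) ^ 2 - (2 * v) ^ 2)
      by ring, hu, hv]
    linear_combination (-i * (z ^ 2 - w ^ 2) * (z - w) ^ 2) * hi
  have h4 : (4 : K) ≠ 0 := by
    rw [show (4 : K) = 2 * 2 by norm_num]; exact mul_ne_zero h2 h2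
  refine ⟨u, v, fun h0 => hwz4 ?_, mul_left_cancel₀ h4 ?_⟩
  · rw [h0, mul_zero, eq_comm, mul_eq_zero, sub_eq_zero] at hprod
    exact (hprod.resolve_left (mul_ne_zero h2 hi0)).symm
  · linear_combination (2 * u + w + z) * hu + (2 * v + i * (z - w)) * hv + (z - w) ^ 2 * hi
      + 4 * hwz

theorem exists_four_distinct_sum_sum_sq (hK : 10 ≤ Fintype.card K) (h2 : (2 : K) ≠ 0)
    (hneg : IsSquare (-1 : K)) (A B : K) :
    ∃ x1 x2 x3 x4 : K, x1 ≠ x2 ∧ x1 ≠ x3 ∧ x1 ≠ x4 ∧ x2 ≠ x3 ∧ x2 ≠ x4 ∧ x3 ≠ x4 ∧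
      x1 + x2 + x3 + x4 = A ∧ x1 ^ 2 + x2 ^ 2 + x3 ^ 2 + x4 ^ 2 = B := by
  have h4 : (4 : K) ≠ 0 := by
    rw [show (4 : K) = 2 * 2 by norm_num]; exact mul_ne_zero h2 h2
  set a := A / 4
  have ha : 4 * a = A := mul_div_cancel₀ A h4
  obtain ⟨u, v, huv, hc⟩ := exists_sq_add_sq_eq hK h2 hneg ((B - 4 * a ^ 2) / 2)
  replace hc : 2 * (u ^ 2 + v ^ 2) = B - 4 * a ^ 2 := by rw [hc, mul_div_cancel₀ _ h2]
  simp only [mul_ne_zero_iff, sub_ne_zero] at huv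
  obtain ⟨⟨⟨hu, hv⟩, hu_sub⟩, hu_add⟩ := huv
  refine ⟨a + u, a - u, a + v, a - v, fun h => mul_ne_zero h2 hu (by linear_combination h),
    fun h => hu_sub (by linear_combination h), fun h => hu_add (by linear_combination h),
    fun h => hu_add (by linear_combination -h), fun h => hu_sub (by linear_combination -h),
    fun h => mul_ne_zero h2 hv (by linear_combination h), by linear_combination ha,
    by linear_combination hc⟩

theorem isSumOfFourDistinct_parabola (hK : 10 ≤ Fintype.card K) (h2 : (2 : K) ≠ 0)
    (hneg : IsSquare (-1 : K)) (g : K × K) : IsSumOfFourDistinct (parabola K) g := by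
  obtain ⟨x1, x2, x3, x4, h12, h13, h14, h23, h24, h34, hsum, hsum_sq⟩ :=
    exists_four_distinct_sum_sum_sq hK h2 hneg g.1 g.2
  have hinj : Injective fun x : K => (x, x ^ 2) := fun x y h => congrArg Prod.fst h
  exact ⟨_, ⟨x1, rfl⟩, _, ⟨x2, rfl⟩, _, ⟨x3, rfl⟩, _, ⟨x4, rfl⟩, hinj.ne h12, hinj.ne h13,
    hinj.ne h14, hinj.ne h23, hinj.ne h24, hinj.ne h34, Prod.ext hsum hsum_sq⟩

theorem FiniteField.isSquare_neg_one_of_card_eq_sq {n : ℕ} (hK : Fintype.card K = n ^ 2) :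
    IsSquare (-1 : K) := by
  rw [FiniteField.isSquare_neg_one_iff, hK, Nat.pow_mod]
  have := Nat.mod_lt n (show 0 < 4 by norm_num)
  interval_cases n % 4 <;> decide

end FiniteField

theorem nonempty_linearEquiv_of_card_eq {k V W : Type*} [Field k] [Fintype k]
    [AddCommGroup V] [Module k V] [Fintype V] [AddCommGroup W] [Module k W] [Fintype W]
    (h : Fintype.card V = Fintype.card W) : Nonempty (V ≃ₗ[k] W) :=
  FiniteDimensional.nonempty_linearEquiv_of_finrank_eq <|
    Nat.pow_right_injective (Fintype.one_lt_card (α := k)) <| by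
      simp only [← Module.card_eq_pow_finrank, h]

theorem FiniteField.exists_prod_addEquiv_degreeLT (F : Type*) [Field F] [Fintype F] {m : ℕ}
    (hm : m ≠ 0) : ∃ (K : Type) (_ : Field K) (_ : Fintype K),
      Fintype.card K = Fintype.card F ^ m ∧ Nonempty (K × K ≃+ degreeLT F (2 * m)) := by
  obtain ⟨n, hr, hF⟩ := FiniteField.card F (ringChar F)
  set r := ringChar F
  have : Fact r.Prime := ⟨hr⟩
  let : Algebra (ZMod r) F := ZMod.algebra F r
  let : Fintype (GaloisField r (n * m)) := Fintype.ofFinite _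
  have hK : Fintype.card (GaloisField r (n * m)) = Fintype.card F ^ m := by
    rw [← Nat.card_eq_fintype_card, GaloisField.card r _ (by positivity), hF, pow_mul]
  refine ⟨GaloisField r (n * m), inferInstance, inferInstance, hK, ?_⟩
  obtain ⟨e⟩ := nonempty_linearEquiv_of_card_eq (k := ZMod r)
    (V := GaloisField r (n * m) × GaloisField r (n * m)) (W := Fin (2 * m) → F) (by
      rw [Fintype.card_prod, Fintype.card_fun, hK, Fintype.card_fin]; ring)
  exact ⟨e.toAddEquiv.trans (degreeLTEquiv F (2 * m)).toAddEquiv.symm⟩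

theorem stmt_6_general (p h : ℕ) (hp : p.Prime) (hodd : p ≠ 2) :
    ∃ Cbound : ℕ, ∀ M0 : ℕ, Cbound ≤ M0 →
    ∀ (F : Type) [Field F] [Fintype F], Fintype.card F = p ^ h →
    ∃ S : Set (Polynomial F),
      (∀ f ∈ S, f.degree < (4 * M0 : ℕ)) ∧
      (∀ a ∈ S, ∀ b ∈ S, ∀ c ∈ S, ∀ d ∈ S,
        a - b = c - d → a - b ≠ 0 → a = c ∧ b = d) ∧
      (∀ g : Polynomial F, g.degree < (4 * M0 : ℕ) →
        ∃ s1 ∈ S, ∃ s2 ∈ S, ∃ s3 ∈ S, ∃ s4 ∈ S,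
          s1 ≠ s2 ∧ s1 ≠ s3 ∧ s1 ≠ s4 ∧ s2 ≠ s3 ∧ s2 ≠ s4 ∧ s3 ≠ s4 ∧
          s1 + s2 + s3 + s4 = g) := by
  refine ⟨2, fun M0 hM0 F _ _ hF => ?_⟩
  rw [show 4 * M0 = 2 * (2 * M0) by ring]
  obtain ⟨K, _, _, hK, ⟨ψ⟩⟩ :=
    FiniteField.exists_prod_addEquiv_degreeLT F (m := 2 * M0) (by omega)
  have hFodd : Fintype.card F % 2 = 1 := Nat.odd_iff.mp (hF ▸ (hp.odd_of_ne_two hodd).pow)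
  have h2 : (2 : K) ≠ 0 := Ring.two_ne_zero <| mt FiniteField.even_card_iff_char_two.mp <| by
    rw [hK, Nat.pow_mod, hFodd, one_pow]; decide
  have hneg : IsSquare (-1 : K) :=
    FiniteField.isSquare_neg_one_of_card_eq_sq (n := Fintype.card F ^ M0) (by rw [hK]; ring)
  have h10 : 10 ≤ Fintype.card K := by
    have : 3 ≤ Fintype.card F := by have := Fintype.one_lt_card (α := F); omega
    calc 10 ≤ 3 ^ (2 * 2) := by norm_num
      _ ≤ 3 ^ (2 * M0) := Nat.pow_le_pow_right (by norm_num) (by omega)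
      _ ≤ Fintype.card F ^ (2 * M0) := Nat.pow_le_pow_left this _
      _ = _ := hK.symm
  let f : K × K →+ F[X] :=
    (degreeLT F (2 * (2 * M0))).subtype.toAddMonoidHom.comp ψ.toAddMonoidHom
  have hf : Injective f := Subtype.val_injective.comp ψ.injective
  refine ⟨f '' parabola K, ?_, (isSidon_parabola h2).image f hf, fun g hg => ?_⟩
  · rintro _ ⟨x, -, rfl⟩
    exact mem_degreeLT.mp (ψ x).2
  · obtain ⟨x, rfl⟩ : ∃ x, f x = g := ⟨ψ.symm ⟨g, mem_degreeLT.mpr hg⟩, by simp [f]⟩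
    exact (isSumOfFourDistinct_parabola h10 h2 hneg x).image f hf

/-- For `p` an odd prime, `q = p^h`, and `M0` sufficiently large, there exists
a Sidon set `S` in `G_{4M0} = {f ∈ F_q[t] : deg f < 4M0}` such that every
`g ∈ G_{4M0}` is a sum of four pairwise distinct elements of `S`. -/
theorem stmt_6 (p h : ℕ) (hp : p.Prime) (hodd : p ≠ 2) (hh : 0 < h) :
    ∃ Cbound : ℕ, ∀ M0 : ℕ, Cbound ≤ M0 →
    ∀ (F : Type) [Field F] [Fintype F], Fintype.card F = p ^ h →
    ∃ S : Set (Polynomial F),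
      (∀ f ∈ S, f.degree < (4 * M0 : ℕ)) ∧
      (∀ a ∈ S, ∀ b ∈ S, ∀ c ∈ S, ∀ d ∈ S,
        a - b = c - d → a - b ≠ 0 → a = c ∧ b = d) ∧
      (∀ g : Polynomial F, g.degree < (4 * M0 : ℕ) →
        ∃ s1 ∈ S, ∃ s2 ∈ S, ∃ s3 ∈ S, ∃ s4 ∈ S,
          s1 ≠ s2 ∧ s1 ≠ s3 ∧ s1 ≠ s4 ∧ s2 ≠ s3 ∧ s2 ≠ s4 ∧ s3 ≠ s4 ∧
          s1 + s2 + s3 + s4 = g) :=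
  stmt_6_general p h hp hodd
end

section
/- Let α, β be real numbers with 0 < α < 1, 0 < β < 1, and α + β > 1. Then there is a constant C depending only on α, β, q such that for every nonzero n ∈ F_q[t] and every integer M ≥ -1, the sum σ_{α,β}(n; M) = ∑_{x ∈ F_q[t], deg x > M} q^{-α deg x} · q^{-β deg(n - x)} satisfies σ_{α,β}(n; M) ≤ C · q^{-(α+β-1)·max{deg n, M}}. -/
/-!
Write `d = deg x`, `e = deg (n - x)`, `D = deg n` and `K = max D M`. Since `x + (n - x) = n`, the
larger of `d, e` equals `max (min d e) D`, and it is at least `K`. For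
`0 < ε ≤ min (1 - α, 1 - β, α + β - 1)` this gives `q^(-α d - β e) ≤ w d + w e` with
`w m = q^(-(α + β - 1) K - m - ε |m - K|)`. At most `q^(m + 1)` polynomials have degree `m`, so
summing `w` over `x` and over `n - x` gives at most `2 q^(1 - (α + β - 1) K) ∑_{k ∈ ℤ} q^(-ε |k|)`.
-/

open Polynomial Finset

namespace Polynomial

variable {R : Type*} [Semiring R]

theorem natDegree_eq_max_natDegree_add_of_le {p q : R[X]} (h : p.natDegree ≤ q.natDegree) :
    q.natDegree = max p.natDegree (p + q).natDegree := by
  rcases h.lt_or_eq with h | h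
  · rw [natDegree_add_eq_right_of_natDegree_lt h, max_eq_right h.le]
  · have := natDegree_add_le p q
    omega

theorem card_le_of_natDegree_le [Fintype R] {ι : Type*} {t : Finset ι} {f : ι → R[X]}
    (hf : Set.InjOn f t) {m : ℕ} (hm : ∀ i ∈ t, (f i).natDegree ≤ m) :
    #t ≤ Fintype.card R ^ (m + 1) := by
  classical
  calc #t ≤ #(univ : Finset (Fin (m + 1) → R)) := by
        refine card_le_card_of_injOn (fun i k => (f i).coeff k) (fun _ _ => mem_univ _) ?_
        intro i hi j hj hij
        refine hf hi hj ((ext_iff_natDegree_le (hm i hi) (hm j hj)).2 fun k hk => ?_)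
        exact congrFun hij ⟨k, Nat.lt_succ_of_le hk⟩
    _ = Fintype.card R ^ (m + 1) := by simp

theorem sum_comp_natDegree_le_tsum [Fintype R] {ι : Type*} (t : Finset ι) {f : ι → R[X]}
    (hf : Set.InjOn f t) {w : ℕ → ℝ} (hw : ∀ m, 0 ≤ w m)
    (hs : Summable fun m => (Fintype.card R : ℝ) ^ (m + 1) * w m) :
    ∑ i ∈ t, w (f i).natDegree ≤ ∑' m, (Fintype.card R : ℝ) ^ (m + 1) * w m := by
  classical
  rw [Finset.sum_comp w fun i => (f i).natDegree]
  refine (sum_le_sum fun m _ => ?_).trans (hs.sum_le_tsum _ fun m _ => ?_)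
  · rw [nsmul_eq_mul]
    gcongr
    · exact hw m
    · exact_mod_cast card_le_of_natDegree_le (t := {i ∈ t | (f i).natDegree = m})
        (hf.mono (coe_subset.2 (filter_subset _ _))) fun i hi => (mem_filter.1 hi).2.le
  · exact mul_nonneg (by positivity) (hw m)

end Polynomial

/-- The factor `Q ^ (-m)` offsets the at most `Q ^ (m + 1)` polynomials of degree `m`, leaving
geometric decay in `|m - K|`. -/
noncomputable def degreeWeight (Q s ε : ℝ) (K m : ℕ) : ℝ :=
  Q ^ (-(s - 1) * K - m - ε * |(m : ℝ) - K|)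

theorem neg_mul_sub_mul_le_of_eq_max {α β ε : ℝ} (hεα : ε ≤ 1 - α) (hε : ε ≤ α + β - 1)
    {d e D K : ℕ} (he : e = max d D) (hDK : D ≤ K) (hKe : K ≤ e) :
    -α * d - β * e ≤ -(α + β - 1) * K - d - ε * |(d : ℝ) - K| := by
  rcases le_total d K with hdK | hKd
  · have heK : e = K := by omega
    have hdK' : (d : ℝ) ≤ K := by exact_mod_cast hdK
    rw [heK, abs_of_nonpos (by linarith)]
    nlinarith [mul_nonneg (sub_nonneg.2 hdK') (by linarith : 0 ≤ 1 - α - ε)]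
  · have hed : e = d := by omega
    have hKd' : (K : ℝ) ≤ d := by exact_mod_cast hKd
    rw [hed, abs_of_nonneg (by linarith)]
    nlinarith [mul_nonneg (sub_nonneg.2 hKd') (by linarith : 0 ≤ α + β - 1 - ε)]

theorem rpow_mul_rpow_le_degreeWeight_add {R : Type*} [Semiring R] {Q α β ε : ℝ} (hQ : 1 ≤ Q)
    (hεα : ε ≤ 1 - α) (hεβ : ε ≤ 1 - β) (hε : ε ≤ α + β - 1) {p q : R[X]} {K : ℕ}
    (hDK : (p + q).natDegree ≤ K) (hK : K ≤ max p.natDegree q.natDegree) :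
    Q ^ (-α * p.natDegree) * Q ^ (-β * q.natDegree) ≤
      degreeWeight Q (α + β) ε K p.natDegree + degreeWeight Q (α + β) ε K q.natDegree := by
  have hQ0 : 0 < Q := by linarith
  rw [← Real.rpow_add hQ0]
  rcases le_total p.natDegree q.natDegree with h | h
  · have he := natDegree_eq_max_natDegree_add_of_le h
    refine le_add_of_le_of_nonneg ?_ (Real.rpow_nonneg hQ0.le _)
    refine Real.rpow_le_rpow_of_exponent_le hQ ?_
    have := neg_mul_sub_mul_le_of_eq_max hεα hε he hDK (by omega)
    linarith
  · have he := natDegree_eq_max_natDegree_add_of_le h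
    rw [add_comm q] at he
    refine le_add_of_nonneg_of_le (Real.rpow_nonneg hQ0.le _) ?_
    refine Real.rpow_le_rpow_of_exponent_le hQ ?_
    have := neg_mul_sub_mul_le_of_eq_max (α := β) (β := α) hεβ (by linarith) he hDK (by omega)
    linarith

theorem summable_rpow_neg_mul_abs {Q ε : ℝ} (hQ : 1 < Q) (hε : 0 < ε) :
    Summable fun k : ℤ => Q ^ (-ε * |(k : ℝ)|) := by
  have hgeom : Summable fun n : ℕ => Q ^ (-ε * n) := by
    simp_rw [Real.rpow_mul_natCast (by linarith : 0 ≤ Q)]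
    exact summable_geometric_of_lt_one (Real.rpow_nonneg (by linarith) _)
      (Real.rpow_lt_one_of_one_lt_of_neg hQ (by linarith))
  refine Summable.of_nat_of_neg ?_ ?_ <;> simpa using hgeom

theorem pow_succ_mul_degreeWeight {Q : ℝ} (hQ : 0 < Q) (s ε : ℝ) (K m : ℕ) :
    Q ^ (m + 1) * degreeWeight Q s ε K m =
      Q ^ (1 - (s - 1) * K) * Q ^ (-ε * |((m - K : ℤ) : ℝ)|) := by
  rw [degreeWeight, ← Real.rpow_natCast, ← Real.rpow_add hQ, ← Real.rpow_add hQ]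
  congr 1
  push_cast
  ring

theorem summable_pow_succ_mul_degreeWeight {Q ε : ℝ} (hQ : 1 < Q) (hε : 0 < ε) (s : ℝ)
    (K : ℕ) : Summable fun m : ℕ => Q ^ (m + 1) * degreeWeight Q s ε K m := by
  simp_rw [pow_succ_mul_degreeWeight (by linarith : 0 < Q)]
  exact ((summable_rpow_neg_mul_abs hQ hε).comp_injective
    (fun a b h => by simpa using h : Function.Injective fun m : ℕ => (m - K : ℤ))).mul_left _

theorem tsum_pow_succ_mul_degreeWeight_le {Q ε : ℝ} (hQ : 1 < Q) (hε : 0 < ε) (s : ℝ) (K : ℕ) :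
    ∑' m : ℕ, Q ^ (m + 1) * degreeWeight Q s ε K m ≤
      Q ^ (1 - (s - 1) * K) * ∑' k : ℤ, Q ^ (-ε * |(k : ℝ)|) := by
  have hQ0 : 0 < Q := by linarith
  simp_rw [pow_succ_mul_degreeWeight hQ0, tsum_mul_left]
  gcongr
  exact tsum_comp_le_tsum_of_inj (summable_rpow_neg_mul_abs hQ hε)
    (fun _ => Real.rpow_nonneg hQ0.le _) (fun a b h => by simpa using h)

theorem stmt_9_general (F : Type*) [Field F] [Fintype F] (α β : ℝ)
    (hα1 : α < 1) (hβ1 : β < 1) (hαβ : 1 < α + β) :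
    ∃ C : ℝ, 0 < C ∧ ∀ (n : Polynomial F), n ≠ 0 → ∀ M : ℤ, -1 ≤ M →
      ∑' x : {x : Polynomial F // x ≠ 0 ∧ M < (x.natDegree : ℤ) ∧ n - x ≠ 0},
          (Fintype.card F : ℝ) ^ (-α * ((x : Polynomial F).natDegree : ℝ)) *
            (Fintype.card F : ℝ) ^ (-β * ((n - (x : Polynomial F)).natDegree : ℝ))
        ≤ C * (Fintype.card F : ℝ) ^
            (-(α + β - 1) * max ((n.natDegree : ℝ)) ((M : ℝ))) := by
  set Q : ℝ := (Fintype.card F : ℝ)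
  have hQ : 1 < Q := Nat.one_lt_cast.2 Fintype.one_lt_card
  obtain ⟨ε, hε0, hεα, hεβ, hε⟩ : ∃ ε : ℝ, 0 < ε ∧ ε ≤ 1 - α ∧ ε ≤ 1 - β ∧ ε ≤ α + β - 1 :=
    ⟨min (min (1 - α) (1 - β)) (α + β - 1), lt_min (lt_min (by linarith) (by linarith))
      (by linarith), (min_le_left _ _).trans (min_le_left _ _),
      (min_le_left _ _).trans (min_le_right _ _), min_le_right _ _⟩
  set S := ∑' k : ℤ, Q ^ (-ε * |(k : ℝ)|)
  have hS : 0 < S :=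
    (summable_rpow_neg_mul_abs hQ hε0).tsum_pos (fun _ => by positivity) 0 (by simp)
  refine ⟨2 * Q * S, by positivity, fun n _ M _ => ?_⟩
  set K := max n.natDegree M.toNat
  have hK : max (n.natDegree : ℝ) M = K := by
    have : max (n.natDegree : ℤ) M = K := by omega
    exact_mod_cast this
  rw [hK]
  have hsum := summable_pow_succ_mul_degreeWeight hQ hε0 (α + β) K
  have htsum := tsum_pow_succ_mul_degreeWeight_le hQ hε0 (α + β) K
  refine tsum_le_of_sum_le' (by positivity) fun s => ?_
  set w := degreeWeight Q (α + β) ε K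
  calc ∑ x ∈ s, Q ^ (-α * ((x : F[X]).natDegree : ℝ)) * Q ^ (-β * ((n - x).natDegree : ℝ))
      ≤ ∑ x ∈ s, (w (x : F[X]).natDegree + w (n - x).natDegree) := by
        refine sum_le_sum fun x _ => ?_
        have hn : (x : F[X]) + (n - x) = n := add_sub_cancel _ _
        have hD := natDegree_add_le (x : F[X]) (n - x)
        rw [hn] at hD
        refine rpow_mul_rpow_le_degreeWeight_add hQ.le hεα hεβ hε (by rw [hn]; omega) ?_
        have hxM := x.2.2.1
        omega
    _ ≤ 2 * ∑' m : ℕ, Q ^ (m + 1) * w m := by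
        rw [sum_add_distrib, two_mul]
        have hw : ∀ m, 0 ≤ w m := fun m => Real.rpow_nonneg (by positivity) _
        gcongr
        · exact sum_comp_natDegree_le_tsum s Subtype.val_injective.injOn hw hsum
        · exact sum_comp_natDegree_le_tsum s
            ((sub_right_injective (G := F[X])).comp Subtype.val_injective).injOn hw hsum
    _ ≤ 2 * (Q ^ (1 - (α + β - 1) * K) * S) := mul_le_mul_of_nonneg_left htsum zero_le_two
    _ = 2 * Q * S * Q ^ (-(α + β - 1) * (K : ℝ)) := by
        rw [sub_eq_add_neg, Real.rpow_add (by positivity), Real.rpow_one, neg_mul]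
        ring

/-- Lemma (basic 1, part i): for `0 < α, β < 1` with `α + β > 1`, there is a
constant `C = C(α, β, q)` such that for all nonzero `n` and all integers
`M ≥ -1`,
`σ_{α,β}(n; M) = ∑_{deg x > M} q^{-α deg x} q^{-β deg (n-x)}
  ≤ C q^{-(α+β-1) max{deg n, M}}`
(terms with `x = 0` or `n - x = 0` contribute zero). -/
theorem stmt_9 (F : Type*) [Field F] [Fintype F] (α β : ℝ)
    (hα : 0 < α) (hα1 : α < 1) (hβ : 0 < β) (hβ1 : β < 1) (hαβ : 1 < α + β) :
    ∃ C : ℝ, 0 < C ∧ ∀ (n : Polynomial F), n ≠ 0 → ∀ M : ℤ, -1 ≤ M →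
      ∑' x : {x : Polynomial F // x ≠ 0 ∧ M < (x.natDegree : ℤ) ∧ n - x ≠ 0},
          (Fintype.card F : ℝ) ^ (-α * ((x : Polynomial F).natDegree : ℝ)) *
            (Fintype.card F : ℝ) ^ (-β * ((n - (x : Polynomial F)).natDegree : ℝ))
        ≤ C * (Fintype.card F : ℝ) ^
            (-(α + β - 1) * max ((n.natDegree : ℝ)) ((M : ℝ))) :=
  stmt_9_general F α β hα1 hβ1 hαβ
end

section
/- Let α, β be real numbers with 0 < α < 1, 0 < β < 1, and α + β > 1. Then there is a constant C depending only on α, β, q such that for every nonzero n ∈ F_q[t], ∑_{x,y ∈ F_q[t] nonzero, x+y=n} q^{-α deg x} · q^{-β deg y} ≤ C · q^{-(α+β-1) deg n}. -/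
/-!
Write `a = q^(-α)` and `b = q^(-β)`, so that the hypotheses read `q a > 1`, `q b > 1`, `q a b < 1`
and the claimed bound is `C (q a b)^(deg n)`. If `x + y = n`, then either one of `x`, `y` has degree
`< deg n` and the other has degree exactly `deg n`, or both have the same degree `d ≥ deg n`. As `x`
determines `y` and there are at most `q^(d+1)` polynomials of degree `d`, the three parts are bounded
by the geometric sums `q b^m ∑_{d<m} (q a)^d`, `q a^m ∑_{d<m} (q b)^d` and `q ∑_{d≥m} (q a b)^d`,
where `m = deg n`; each is `O((q a b)^m)`.
-/

open Polynomial Finset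

namespace Polynomial

variable {R : Type*}

section Semiring

variable [Semiring R]

theorem natDegree_right_eq_of_add_eq_of_lt {x y n : R[X]} (h : x + y = n)
    (hx : x.natDegree < n.natDegree) : y.natDegree = n.natDegree := by
  subst h
  rcases lt_trichotomy y.natDegree (x + y).natDegree with hy | hy | hy
  · exact absurd (natDegree_add_le x y) (max_lt hx hy).not_ge
  · exact hy
  · exact absurd (natDegree_add_eq_right_of_natDegree_lt (hx.trans hy)) hy.ne

theorem natDegree_eq_of_add_eq_of_le {x y n : R[X]} (h : x + y = n)
    (hx : n.natDegree ≤ x.natDegree) (hy : n.natDegree ≤ y.natDegree) :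
    x.natDegree = y.natDegree := by
  subst h
  rcases lt_trichotomy x.natDegree y.natDegree with hxy | hxy | hxy
  · rw [natDegree_add_eq_right_of_natDegree_lt hxy] at hx; omega
  · exact hxy
  · rw [natDegree_add_eq_left_of_natDegree_lt hxy] at hy; omega

def degWeight (a b : ℝ) (p : R[X] × R[X]) : ℝ := a ^ p.1.natDegree * b ^ p.2.natDegree

theorem degWeight_swap (a b : ℝ) (p : R[X] × R[X]) : degWeight a b p.swap = degWeight b a p :=
  mul_comm _ _

theorem sum_degWeight_swap (a b : ℝ) {s : Finset (R[X] × R[X])} :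
    ∑ p ∈ s.map (Equiv.prodComm R[X] R[X]).toEmbedding, degWeight b a p =
      ∑ p ∈ s, degWeight a b p := by
  rw [sum_map]
  exact sum_congr rfl fun p _ => degWeight_swap b a p

variable [Fintype R]

theorem card_le_of_forall_natDegree_le {s : Finset R[X]} {d : ℕ}
    (hs : ∀ x ∈ s, x.natDegree ≤ d) : #s ≤ Fintype.card R ^ (d + 1) := by
  classical
  calc #s ≤ #(univ : Finset (Fin (d + 1) → R)) := by
        refine card_le_card_of_injOn (fun x i => x.coeff i) (fun _ _ => mem_coe.2 (mem_univ _)) ?_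
        intro x hx y hy hxy
        ext j
        by_cases hj : j ≤ d
        · exact congrFun hxy ⟨j, Nat.lt_succ_of_le hj⟩
        · rw [coeff_eq_zero_of_natDegree_lt ((hs x hx).trans_lt (not_le.1 hj)),
            coeff_eq_zero_of_natDegree_lt ((hs y hy).trans_lt (not_le.1 hj))]
    _ = Fintype.card R ^ (d + 1) := by simp

theorem sum_natDegree_le_sum_card_pow_mul {ι : Type*} {s : Finset ι} {g : ι → R[X]}
    (hg : Set.InjOn g s) {f : ℕ → ℝ} (hf : ∀ d, 0 ≤ f d) :
    ∑ i ∈ s, f (g i).natDegree ≤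
      ∑ d ∈ s.image (natDegree ∘ g), (Fintype.card R : ℝ) ^ (d + 1) * f d := by
  classical
  refine (Finset.sum_comp (s := s) f (natDegree ∘ g)).trans_le (sum_le_sum fun d _ => ?_)
  rw [nsmul_eq_mul]
  gcongr
  · exact hf d
  rw [← card_image_of_injOn (hg.mono (filter_subset _ s))]
  exact_mod_cast card_le_of_forall_natDegree_le <| by
    simp only [mem_image, mem_filter]
    rintro _ ⟨i, ⟨-, rfl⟩, rfl⟩
    rfl

theorem sum_pow_natDegree_le_of_lt {ι : Type*} {s : Finset ι} {g : ι → R[X]}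
    (hg : Set.InjOn g s) {c : ℝ} (hc0 : 0 ≤ c) (hc : 1 < Fintype.card R * c) {m : ℕ}
    (hlt : ∀ i ∈ s, (g i).natDegree < m) :
    ∑ i ∈ s, c ^ (g i).natDegree ≤
      Fintype.card R * (Fintype.card R * c) ^ m / (Fintype.card R * c - 1) := by
  set q : ℝ := (Fintype.card R : ℝ)
  have hsub : s.image (natDegree ∘ g) ⊆ range m := by
    simpa [subset_iff] using hlt
  calc ∑ i ∈ s, c ^ (g i).natDegree
      ≤ ∑ d ∈ s.image (natDegree ∘ g), q ^ (d + 1) * c ^ d :=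
        sum_natDegree_le_sum_card_pow_mul hg (pow_nonneg hc0)
    _ ≤ ∑ d ∈ range m, q ^ (d + 1) * c ^ d :=
        sum_le_sum_of_subset_of_nonneg hsub fun d _ _ => by positivity
    _ = q * (((q * c) ^ m - 1) / (q * c - 1)) := by
        rw [← geom_sum_eq hc.ne', mul_sum]
        exact sum_congr rfl fun d _ => by ring
    _ ≤ q * (q * c) ^ m / (q * c - 1) := by
        rw [mul_div_assoc]
        gcongr
        linarith

theorem sum_pow_natDegree_le_of_le {ι : Type*} {s : Finset ι} {g : ι → R[X]}
    (hg : Set.InjOn g s) {c : ℝ} (hc0 : 0 ≤ c) (hc : Fintype.card R * c < 1) {m : ℕ}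
    (hle : ∀ i ∈ s, m ≤ (g i).natDegree) :
    ∑ i ∈ s, c ^ (g i).natDegree ≤
      Fintype.card R * (Fintype.card R * c) ^ m / (1 - Fintype.card R * c) := by
  set q : ℝ := (Fintype.card R : ℝ)
  obtain ⟨N, hN⟩ := exists_nat_subset_range (s.image (natDegree ∘ g))
  have hsub : s.image (natDegree ∘ g) ⊆ Ico m N := fun d hd => by
    obtain ⟨i, hi, rfl⟩ := mem_image.1 hd
    exact mem_Ico.2 ⟨hle i hi, mem_range.1 (hN hd)⟩
  calc ∑ i ∈ s, c ^ (g i).natDegree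
      ≤ ∑ d ∈ s.image (natDegree ∘ g), q ^ (d + 1) * c ^ d :=
        sum_natDegree_le_sum_card_pow_mul hg (pow_nonneg hc0)
    _ ≤ ∑ d ∈ Ico m N, q ^ (d + 1) * c ^ d :=
        sum_le_sum_of_subset_of_nonneg hsub fun d _ _ => by positivity
    _ = q * ∑ d ∈ Ico m N, (q * c) ^ d := by
        rw [mul_sum]
        exact sum_congr rfl fun d _ => by ring
    _ ≤ q * ((q * c) ^ m / (1 - q * c)) := by
        gcongr
        exact geom_sum_Ico_le_of_lt_one (by positivity) hc
    _ = q * (q * c) ^ m / (1 - q * c) := (mul_div_assoc ..).symm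

end Semiring

section Ring

variable [Ring R] {n : R[X]} {s : Finset (R[X] × R[X])}

theorem injOn_fst_of_add_eq (hs : ∀ p ∈ s, p.1 + p.2 = n) :
    Set.InjOn Prod.fst (s : Set (R[X] × R[X])) := fun p hp p' hp' h =>
  Prod.ext h (add_left_cancel ((hs p hp).trans (h ▸ hs p' hp').symm))

variable [Fintype R] {a b : ℝ}

theorem sum_degWeight_le_of_fst_lt (ha : 0 ≤ a) (hb : 0 ≤ b) (hqa : 1 < Fintype.card R * a)
    (hs : ∀ p ∈ s, p.1 + p.2 = n ∧ p.1.natDegree < n.natDegree) :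
    ∑ p ∈ s, degWeight a b p ≤
      Fintype.card R * (Fintype.card R * a - 1)⁻¹ * (Fintype.card R * a * b) ^ n.natDegree := by
  set q : ℝ := (Fintype.card R : ℝ)
  set m := n.natDegree
  calc ∑ p ∈ s, degWeight a b p = (∑ p ∈ s, a ^ p.1.natDegree) * b ^ m := by
        rw [sum_mul]
        refine sum_congr rfl fun p hp => ?_
        rw [degWeight, natDegree_right_eq_of_add_eq_of_lt (hs p hp).1 (hs p hp).2]
    _ ≤ q * (q * a) ^ m / (q * a - 1) * b ^ m := by
        gcongr
        · exact sum_pow_natDegree_le_of_lt (injOn_fst_of_add_eq fun p hp => (hs p hp).1) ha hqa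
            fun p hp => (hs p hp).2
    _ = q * (q * a - 1)⁻¹ * (q * a * b) ^ m := by ring

theorem sum_degWeight_le_of_snd_lt (ha : 0 ≤ a) (hb : 0 ≤ b) (hqb : 1 < Fintype.card R * b)
    (hs : ∀ p ∈ s, p.1 + p.2 = n ∧ p.2.natDegree < n.natDegree) :
    ∑ p ∈ s, degWeight a b p ≤
      Fintype.card R * (Fintype.card R * b - 1)⁻¹ * (Fintype.card R * a * b) ^ n.natDegree := by
  rw [← sum_degWeight_swap a b, mul_right_comm _ a b]
  refine sum_degWeight_le_of_fst_lt hb ha hqb fun p hp => ?_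
  obtain ⟨p', hp', rfl⟩ := mem_map.1 hp
  exact ⟨(add_comm _ _).trans (hs p' hp').1, (hs p' hp').2⟩

theorem sum_degWeight_le_of_le (ha : 0 ≤ a) (hb : 0 ≤ b) (hqab : Fintype.card R * a * b < 1)
    (hs : ∀ p ∈ s, p.1 + p.2 = n ∧ n.natDegree ≤ p.1.natDegree ∧ n.natDegree ≤ p.2.natDegree) :
    ∑ p ∈ s, degWeight a b p ≤
      Fintype.card R * (1 - Fintype.card R * a * b)⁻¹ * (Fintype.card R * a * b) ^ n.natDegree := by
  set q : ℝ := (Fintype.card R : ℝ)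
  set m := n.natDegree
  calc ∑ p ∈ s, degWeight a b p = ∑ p ∈ s, (a * b) ^ p.1.natDegree :=
        sum_congr rfl fun p hp => by
          obtain ⟨hpn, h₁, h₂⟩ := hs p hp
          rw [degWeight, ← natDegree_eq_of_add_eq_of_le hpn h₁ h₂, mul_pow]
    _ ≤ q * (q * (a * b)) ^ m / (1 - q * (a * b)) :=
        sum_pow_natDegree_le_of_le (injOn_fst_of_add_eq fun p hp => (hs p hp).1)
          (mul_nonneg ha hb) (by rwa [← mul_assoc]) fun p hp => (hs p hp).2.1
    _ = q * (1 - q * a * b)⁻¹ * (q * a * b) ^ m := by ring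

theorem sum_degWeight_le (ha : 0 ≤ a) (hb : 0 ≤ b) (hqa : 1 < Fintype.card R * a)
    (hqb : 1 < Fintype.card R * b) (hqab : Fintype.card R * a * b < 1)
    (hs : ∀ p ∈ s, p.1 + p.2 = n) :
    ∑ p ∈ s, degWeight a b p ≤
      Fintype.card R * ((Fintype.card R * a - 1)⁻¹ + (Fintype.card R * b - 1)⁻¹ +
        (1 - Fintype.card R * a * b)⁻¹) * (Fintype.card R * a * b) ^ n.natDegree := by
  set m := n.natDegree
  rw [← sum_filter_add_sum_filter_not s (fun p => p.1.natDegree < m),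
    ← sum_filter_add_sum_filter_not (s.filter fun p => ¬p.1.natDegree < m)
      (fun p => p.2.natDegree < m)]
  have low_fst := sum_degWeight_le_of_fst_lt ha hb hqa
    (s := s.filter fun p => p.1.natDegree < m) fun p hp => by
      rw [mem_filter] at hp
      exact ⟨hs p hp.1, hp.2⟩
  have low_snd := sum_degWeight_le_of_snd_lt ha hb hqb
    (s := (s.filter fun p => ¬p.1.natDegree < m).filter fun p => p.2.natDegree < m)
    fun p hp => by
      simp only [mem_filter] at hp
      exact ⟨hs p hp.1.1, hp.2⟩
  have high := sum_degWeight_le_of_le ha hb hqab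
    (s := (s.filter fun p => ¬p.1.natDegree < m).filter fun p => ¬p.2.natDegree < m)
    fun p hp => by
      simp only [mem_filter, not_lt] at hp
      exact ⟨hs p hp.1.1, hp.1.2, hp.2⟩
  linear_combination low_fst + low_snd + high

end Ring

end Polynomial

theorem stmt_10_general (F : Type*) [Field F] [Fintype F] (α β : ℝ)
    (hα1 : α < 1) (hβ1 : β < 1) (hαβ : 1 < α + β) :
    ∃ C : ℝ, 0 < C ∧ ∀ (n : Polynomial F), n ≠ 0 →
      ∑' xy : {xy : Polynomial F × Polynomial F //
          xy.1 ≠ 0 ∧ xy.2 ≠ 0 ∧ xy.1 + xy.2 = n},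
          (Fintype.card F : ℝ) ^ (-α * (((xy : Polynomial F × Polynomial F).1.natDegree : ℝ))) *
            (Fintype.card F : ℝ) ^ (-β * (((xy : Polynomial F × Polynomial F).2.natDegree : ℝ)))
        ≤ C * (Fintype.card F : ℝ) ^ (-(α + β - 1) * (n.natDegree : ℝ)) := by
  set q : ℝ := (Fintype.card F : ℝ)
  have hq : 1 < q := Nat.one_lt_cast.2 Fintype.one_lt_card
  have hq0 : 0 < q := zero_lt_one.trans hq
  have rpow_natCast_mul (t : ℝ) (d : ℕ) : q ^ (t * d) = (q ^ t) ^ d := by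
    rw [Real.rpow_mul hq0.le, Real.rpow_natCast]
  have mul_rpow (t : ℝ) : q * q ^ t = q ^ (1 + t) := by
    rw [Real.rpow_add hq0, Real.rpow_one]
  have hqa : 1 < q * q ^ (-α) := mul_rpow _ ▸ Real.one_lt_rpow hq (by linarith)
  have hqb : 1 < q * q ^ (-β) := mul_rpow _ ▸ Real.one_lt_rpow hq (by linarith)
  have hqab : q * q ^ (-α) * q ^ (-β) = q ^ (-(α + β - 1)) := by
    rw [mul_rpow, ← Real.rpow_add hq0]
    ring_nf
  have hqab_lt : q * q ^ (-α) * q ^ (-β) < 1 :=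
    hqab ▸ Real.rpow_lt_one_of_one_lt_of_neg hq (by linarith)
  refine ⟨q * ((q * q ^ (-α) - 1)⁻¹ + (q * q ^ (-β) - 1)⁻¹ + (1 - q * q ^ (-α) * q ^ (-β))⁻¹),
    mul_pos hq0 (add_pos (add_pos (inv_pos.2 (sub_pos.2 hqa)) (inv_pos.2 (sub_pos.2 hqb)))
      (inv_pos.2 (sub_pos.2 hqab_lt))), fun n _ => ?_⟩
  rw [rpow_natCast_mul, ← hqab]
  refine tsum_le_of_sum_le' (by positivity) fun s => ?_
  simp only [rpow_natCast_mul]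
  have := Polynomial.sum_degWeight_le (Real.rpow_nonneg hq0.le (-α))
    (Real.rpow_nonneg hq0.le (-β)) hqa hqb hqab_lt (n := n)
    (s := s.map (Function.Embedding.subtype _)) fun p hp => by
      obtain ⟨xy, -, rfl⟩ := mem_map.1 hp
      exact xy.2.2.2
  rw [sum_map] at this
  exact this

/-- Lemma (basic 1, part ii): for `0 < α, β < 1` with `α + β > 1`, there is a
constant `C = C(α, β, q)` such that for every nonzero `n ∈ F_q[t]`,
`∑_{x + y = n, x y ≠ 0} q^{-α deg x} q^{-β deg y} ≤ C q^{-(α+β-1) deg n}`. -/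
theorem stmt_10 (F : Type*) [Field F] [Fintype F] (α β : ℝ)
    (hα : 0 < α) (hα1 : α < 1) (hβ : 0 < β) (hβ1 : β < 1) (hαβ : 1 < α + β) :
    ∃ C : ℝ, 0 < C ∧ ∀ (n : Polynomial F), n ≠ 0 →
      ∑' xy : {xy : Polynomial F × Polynomial F //
          xy.1 ≠ 0 ∧ xy.2 ≠ 0 ∧ xy.1 + xy.2 = n},
          (Fintype.card F : ℝ) ^ (-α * (((xy : Polynomial F × Polynomial F).1.natDegree : ℝ))) *
            (Fintype.card F : ℝ) ^ (-β * (((xy : Polynomial F × Polynomial F).2.natDegree : ℝ)))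
        ≤ C * (Fintype.card F : ℝ) ^ (-(α + β - 1) * (n.natDegree : ℝ)) :=
  stmt_10_general F α β hα1 hβ1 hαβ
end

section
/- Let φ, κ be real numbers with 0 < φ < 1, 0 < κ < 1, and φ + κ > 1. Then there is a constant C depending only on φ, κ, q such that for every r ∈ F_q[t] and every integer M ≥ 0, ∑_{x ∈ F_q[t], deg x > M} q^{-φ deg x} · q^{-κ·max{deg(r+x), M}} ≤ C · q^{(1-φ-κ)·max{deg r, M}}. -/
open scoped Classical

/-- `dmax f M` is `max{deg f, M}` with the convention `deg 0 = -∞`, so that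
`dmax 0 M = M`. -/
noncomputable def dmax {F : Type*} [Field F] (f : Polynomial F) (M : ℕ) : ℕ :=
  if f = 0 then M else max f.natDegree M

/-!
Write `n = deg x`, `d = max{deg(r + x), M}` and `N = max{deg r, M}`. Since `r = (r + x) - x`,
`N ≤ max n d`, so the summand `q^{-φ n - κ d}` is bounded by `q^{-φ n - κ max{n, N}}` (when
`n ≤ d`) or by `q^{-φ max{N, d + 1} - κ d}` (when `d < n`). The first bound depends only on `n`
and the second only on `d`, and at most `q^{k+1}` polynomials `x` have `n = k`, resp. `d = k`
(as `x ↦ r + x` is injective). Each of the two resulting sums over `k` is a two-sided geometric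
series centred at `N`, with ratios `q^{-(1-φ)}`, `q^{-(φ+κ-1)}` and `q^{-(1-κ)}`.
-/

open Finset

section Degrees

variable {F : Type*} [Field F]

lemma le_dmax (f : Polynomial F) (M : ℕ) : M ≤ dmax f M := by
  unfold dmax; split <;> simp

lemma natDegree_le_dmax (f : Polynomial F) (M : ℕ) : f.natDegree ≤ dmax f M := by
  unfold dmax; split
  · simp_all
  · exact le_max_left _ _

lemma dmax_le_max_natDegree_dmax_add (r y : Polynomial F) (M : ℕ) :
    dmax r M ≤ max y.natDegree (dmax (r + y) M) := by
  have hM : M ≤ max y.natDegree (dmax (r + y) M) := (le_dmax _ M).trans (le_max_right _ _)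
  have hr : r.natDegree ≤ max y.natDegree (dmax (r + y) M) :=
    calc r.natDegree = ((r + y) - y).natDegree := by rw [add_sub_cancel_right]
      _ ≤ max (r + y).natDegree y.natDegree := Polynomial.natDegree_sub_le _ _
      _ ≤ max (dmax (r + y) M) y.natDegree := max_le_max (natDegree_le_dmax _ _) le_rfl
      _ = _ := max_comm _ _
  unfold dmax; split
  · exact hM
  · exact max_le hr hM

variable [Fintype F]

lemma Polynomial.card_le_of_natDegree_le_s11 (s : Finset (Polynomial F)) (n : ℕ)
    (h : ∀ p ∈ s, p.natDegree ≤ n) : #s ≤ Fintype.card F ^ (n + 1) := by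
  have hinj : Set.InjOn (fun (p : Polynomial F) (i : Fin (n + 1)) => p.coeff i) s := by
    intro p hp p' hp' hpp'
    ext k
    by_cases hk : k ≤ n
    · exact congrFun hpp' ⟨k, Nat.lt_succ_of_le hk⟩
    · rw [Polynomial.coeff_eq_zero_of_natDegree_lt ((h p hp).trans_lt (not_le.mp hk)),
        Polynomial.coeff_eq_zero_of_natDegree_lt ((h p' hp').trans_lt (not_le.mp hk))]
  simpa using card_le_card_of_injOn _ (fun _ _ => mem_coe.mpr (mem_univ _)) hinj

lemma sum_le_sum_card_pow_mul {ι : Type*} (s : Finset ι) (g : ι → Polynomial F)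
    (hg : Set.InjOn g s) (d : ι → ℕ) (hd : ∀ i ∈ s, (g i).natDegree ≤ d i)
    (w : ℕ → ℝ) (hw : ∀ n, 0 ≤ w n) :
    ∑ i ∈ s, w (d i) ≤ ∑ n ∈ s.image d, (Fintype.card F : ℝ) ^ (n + 1) * w n := by
  rw [sum_comp]
  refine sum_le_sum fun n _ => ?_
  rw [nsmul_eq_mul]
  refine mul_le_mul_of_nonneg_right ?_ (hw n)
  have hfiber : #{i ∈ s | d i = n} ≤ Fintype.card F ^ (n + 1) := by
    rw [← card_image_of_injOn (hg.mono (coe_subset.mpr (filter_subset _ s)))]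
    refine Polynomial.card_le_of_natDegree_le_s11 _ n fun p hp => ?_
    obtain ⟨i, hi, rfl⟩ := mem_image.mp hp
    exact (mem_filter.mp hi).2 ▸ hd i (mem_filter.mp hi).1
  exact_mod_cast hfiber

end Degrees

section Geometric

lemma sum_pow_comp_le {ρ : ℝ} (h0 : 0 ≤ ρ) (h1 : ρ < 1) (S : Finset ℕ) (e : ℕ → ℕ)
    (he : Set.InjOn e S) : ∑ n ∈ S, ρ ^ e n ≤ (1 - ρ)⁻¹ := by
  rw [← sum_image he, ← tsum_geometric_of_lt_one h0 h1]
  exact (summable_geometric_of_lt_one h0 h1).sum_le_tsum _ fun i _ => pow_nonneg h0 i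

variable {Q : ℝ}

lemma inv_one_sub_rpow_neg_pos (hQ : 1 < Q) {γ : ℝ} (hγ : 0 < γ) : 0 < (1 - Q ^ (-γ))⁻¹ :=
  inv_pos.mpr (sub_pos.mpr (Real.rpow_lt_one_of_one_lt_of_neg hQ (neg_neg_of_pos hγ)))

lemma pow_mul_rpow_le (hQ : 1 ≤ Q) {k : ℕ} {x y : ℝ} (h : k + x ≤ y) :
    Q ^ k * Q ^ x ≤ Q ^ y := by
  rw [← Real.rpow_natCast, ← Real.rpow_add (by linarith)]
  exact Real.rpow_le_rpow_of_exponent_le hQ h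

lemma sum_le_of_le_rpow_sub_mul (hQ : 1 < Q) {γ E : ℝ} (hγ : 0 < γ) (S : Finset ℕ)
    (e : ℕ → ℕ) (he : Set.InjOn e S) (w : ℕ → ℝ) (hw : ∀ n ∈ S, w n ≤ Q ^ (E - γ * e n)) :
    ∑ n ∈ S, w n ≤ Q ^ E * (1 - Q ^ (-γ))⁻¹ := by
  have hQ0 : 0 < Q := by linarith
  calc ∑ n ∈ S, w n ≤ ∑ n ∈ S, Q ^ E * (Q ^ (-γ)) ^ e n := by
        refine sum_le_sum fun n hn => ?_
        rw [← Real.rpow_mul_natCast hQ0.le, ← Real.rpow_add hQ0, neg_mul, ← sub_eq_add_neg]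
        exact hw n hn
    _ ≤ Q ^ E * (1 - Q ^ (-γ))⁻¹ := by
        rw [← mul_sum]
        exact mul_le_mul_of_nonneg_left (sum_pow_comp_le (Real.rpow_pos_of_pos hQ0 _).le
          (Real.rpow_lt_one_of_one_lt_of_neg hQ (neg_neg_of_pos hγ)) S e he)
          (Real.rpow_pos_of_pos hQ0 _).le

lemma sum_le_of_le_rpow_tent (hQ : 1 < Q) {α β E : ℝ} (hα : 0 < α) (hβ : 0 < β) (N : ℕ)
    {w : ℕ → ℝ} (hlo : ∀ n ≤ N, w n ≤ Q ^ (E - α * ((N : ℝ) - n)))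
    (hhi : ∀ n, N < n → w n ≤ Q ^ (E - β * ((n : ℝ) - N))) (S : Finset ℕ) :
    ∑ n ∈ S, w n ≤ Q ^ E * ((1 - Q ^ (-α))⁻¹ + (1 - Q ^ (-β))⁻¹) := by
  rw [← sum_filter_add_sum_filter_not S (· ≤ N), mul_add]
  refine add_le_add (sum_le_of_le_rpow_sub_mul hQ hα _ (N - ·) ?_ w fun n hn => ?_)
    (sum_le_of_le_rpow_sub_mul hQ hβ _ (· - N) ?_ w fun n hn => ?_)
  · intro a ha b hb hab
    simp only [mem_coe, mem_filter] at ha hb hab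
    omega
  · rw [Nat.cast_sub (mem_filter.mp hn).2]
    exact hlo n (mem_filter.mp hn).2
  · intro a ha b hb hab
    simp only [mem_coe, mem_filter] at ha hb hab
    omega
  · have hn := not_le.mp (mem_filter.mp hn).2
    rw [Nat.cast_sub hn.le]
    exact hhi n hn

lemma sum_pow_succ_mul_rpow_neg_max_le (hQ : 1 < Q) {φ κ : ℝ} (hφ1 : φ < 1) (hφκ : 1 < φ + κ)
    (N : ℕ) (S : Finset ℕ) :
    ∑ n ∈ S, Q ^ (n + 1) * Q ^ (-φ * n - κ * (max n N : ℕ)) ≤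
      Q ^ (1 + (1 - φ - κ) * N) * ((1 - Q ^ (-(1 - φ)))⁻¹ + (1 - Q ^ (-(φ + κ - 1)))⁻¹) := by
  refine sum_le_of_le_rpow_tent hQ (sub_pos.mpr hφ1) (by linarith) N
    (fun n hn => pow_mul_rpow_le hQ.le ?_) (fun n hn => pow_mul_rpow_le hQ.le ?_) S
  · rw [max_eq_right hn]; push_cast; linarith
  · rw [max_eq_left hn.le]; push_cast; linarith

lemma sum_pow_succ_mul_rpow_neg_max_succ_le (hQ : 1 < Q) {φ κ : ℝ} (hφ : 0 < φ) (hκ1 : κ < 1)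
    (hφκ : 1 < φ + κ) (N : ℕ) (S : Finset ℕ) :
    ∑ d ∈ S, Q ^ (d + 1) * Q ^ (-φ * (max N (d + 1) : ℕ) - κ * d) ≤
      Q ^ (1 + (1 - φ - κ) * N) * ((1 - Q ^ (-(1 - κ)))⁻¹ + (1 - Q ^ (-(φ + κ - 1)))⁻¹) := by
  refine sum_le_of_le_rpow_tent hQ (sub_pos.mpr hκ1) (by linarith) N
    (fun d hd => pow_mul_rpow_le hQ.le ?_) (fun d hd => pow_mul_rpow_le hQ.le ?_) S
  · have hN : (N : ℝ) ≤ (max N (d + 1) : ℕ) := by exact_mod_cast le_max_left _ _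
    have := mul_le_mul_of_nonneg_left hN hφ.le
    push_cast at this ⊢
    linarith
  · rw [max_eq_right (by omega : N ≤ d + 1)]; push_cast; linarith

lemma rpow_mul_rpow_le_add_of_le_max (hQ : 1 ≤ Q) {φ κ : ℝ} (hφ : 0 ≤ φ) (hκ : 0 ≤ κ)
    {n d N : ℕ} (hN : N ≤ max n d) :
    Q ^ (-φ * n) * Q ^ (-κ * d) ≤
      Q ^ (-φ * n - κ * (max n N : ℕ)) + Q ^ (-φ * (max N (d + 1) : ℕ) - κ * d) := by
  have hQ0 : 0 < Q := by linarith
  rw [← Real.rpow_add hQ0]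
  rcases le_or_gt n d with hnd | hdn
  · have : ((max n N : ℕ) : ℝ) ≤ d := by exact_mod_cast max_le hnd (hN.trans (max_le hnd le_rfl))
    have := Real.rpow_le_rpow_of_exponent_le hQ
      (by nlinarith : -φ * n + -κ * d ≤ -φ * n - κ * (max n N : ℕ))
    linarith [Real.rpow_pos_of_pos hQ0 (-φ * (max N (d + 1) : ℕ) - κ * d)]
  · have : ((max N (d + 1) : ℕ) : ℝ) ≤ n := by
      exact_mod_cast max_le (hN.trans (max_le le_rfl hdn.le)) hdn
    have := Real.rpow_le_rpow_of_exponent_le hQ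
      (by nlinarith : -φ * n + -κ * d ≤ -φ * (max N (d + 1) : ℕ) - κ * d)
    linarith [Real.rpow_pos_of_pos hQ0 (-φ * n - κ * (max n N : ℕ))]

end Geometric

/-- Lemma (basic 3): for `0 < φ, κ < 1` with `φ + κ > 1`, there is a constant
`C = C(φ, κ, q)` such that for every `r ∈ F_q[t]` and every `M ≥ 0`,
`∑_{deg x > M} q^{-φ deg x} q^{-κ max{deg(r+x), M}} ≤ C q^{(1-φ-κ) max{deg r, M}}`. -/
theorem stmt_11 (F : Type*) [Field F] [Fintype F] (φ κ : ℝ)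
    (hφ : 0 < φ) (hφ1 : φ < 1) (hκ : 0 < κ) (hκ1 : κ < 1) (hφκ : 1 < φ + κ) :
    ∃ C : ℝ, 0 < C ∧ ∀ (r : Polynomial F) (M : ℕ),
      ∑' x : {x : Polynomial F // x ≠ 0 ∧ M < x.natDegree},
          (Fintype.card F : ℝ) ^ (-φ * ((x : Polynomial F).natDegree : ℝ)) *
            (Fintype.card F : ℝ) ^ (-κ * ((dmax (r + (x : Polynomial F)) M : ℕ) : ℝ))
        ≤ C * (Fintype.card F : ℝ) ^ ((1 - φ - κ) * ((dmax r M : ℕ) : ℝ)) := by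
  have hQ : (1 : ℝ) < Fintype.card F := by exact_mod_cast Fintype.one_lt_card (α := F)
  set Q : ℝ := (Fintype.card F : ℝ)
  set c₁ := (1 - Q ^ (-(1 - φ)))⁻¹
  set c₂ := (1 - Q ^ (-(φ + κ - 1)))⁻¹
  set c₃ := (1 - Q ^ (-(1 - κ)))⁻¹
  have : 0 < c₁ + c₂ + (c₃ + c₂) := by
    have := inv_one_sub_rpow_neg_pos hQ (sub_pos.mpr hφ1)
    have := inv_one_sub_rpow_neg_pos hQ (sub_pos.mpr hκ1)
    have := inv_one_sub_rpow_neg_pos hQ (by linarith : 0 < φ + κ - 1)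
    positivity
  refine ⟨Q * (c₁ + c₂ + (c₃ + c₂)), by positivity, fun r M => ?_⟩
  refine tsum_le_of_sum_le' (by positivity) fun s => ?_
  set N := dmax r M
  calc _ ≤ ∑ x ∈ s, (Q ^ (-φ * x.1.natDegree - κ * (max x.1.natDegree N : ℕ)) +
            Q ^ (-φ * (max N (dmax (r + x.1) M + 1) : ℕ) - κ * dmax (r + x.1) M)) :=
        sum_le_sum fun x _ => rpow_mul_rpow_le_add_of_le_max hQ.le hφ.le hκ.le
          (dmax_le_max_natDegree_dmax_add r x.1 M)
    _ ≤ ∑ n ∈ s.image (Polynomial.natDegree ∘ Subtype.val),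
            Q ^ (n + 1) * Q ^ (-φ * n - κ * (max n N : ℕ)) +
          ∑ d ∈ s.image fun x => dmax (r + Subtype.val x) M,
            Q ^ (d + 1) * Q ^ (-φ * (max N (d + 1) : ℕ) - κ * d) := by
        rw [sum_add_distrib]
        refine add_le_add ?_ ?_
        · exact sum_le_sum_card_pow_mul s _ Subtype.val_injective.injOn _ (fun _ _ => le_rfl)
            (fun n => Q ^ (-φ * n - κ * (max n N : ℕ))) fun _ => by positivity
        · exact sum_le_sum_card_pow_mul s (r + ·.1)
            (fun _ _ _ _ h => Subtype.ext (add_left_cancel h)) _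
            (fun x _ => natDegree_le_dmax _ M)
            (fun d => Q ^ (-φ * (max N (d + 1) : ℕ) - κ * d)) fun _ => by positivity
    _ ≤ Q ^ (1 + (1 - φ - κ) * N) * (c₁ + c₂) + Q ^ (1 + (1 - φ - κ) * N) * (c₃ + c₂) :=
        add_le_add (sum_pow_succ_mul_rpow_neg_max_le hQ hφ1 hφκ N _)
          (sum_pow_succ_mul_rpow_neg_max_succ_le hQ hφ hκ1 hφκ N _)
    _ = _ := by rw [Real.rpow_add (by linarith), Real.rpow_one]; ring
end

section
/- Let q be a prime power and 1/2 < γ < 2/3. There is a constant C depending only on γ and q such that for all nonzero polynomials a, b ∈ F_q[t], ∑_{x ∈ F_q[t], x ≠ 0} q^{-γ deg x} · q^{-γ deg(x+a)} · q^{(1-2γ) deg(x+b)} ≤ C · q^{(1-2γ)(deg a + deg b)}. -/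
/-!
Write `d₁, d₂, d₃` for the degrees of `x, x + a, x + b`. Since the degree is an ultrametric
valuation, in each of the triples `(d₁, deg a, d₂)` and `(d₁, deg b, d₃)` the two largest entries
coincide, and a case analysis shows that the exponent `-γ d₁ - γ d₂ + (1 - 2γ) d₃` is at most
`(1 - 2γ)(deg a + deg b) - dᵢ - ε |dᵢ - Nᵢ|` for some `i`, where `N₁ = N₂ = deg a`, `N₃ = deg b`
and `ε = min (2 - 3γ) (2γ - 1) > 0`. There are at most `q ^ (d + 1)` polynomials of degree `d`,
so each weight `q ^ (-d - ε |d - N|)` sums over all `x` to at most `2q / (1 - q ^ (-ε))`,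
whatever `N` and the shift are. The sums are taken in `ℝ≥0∞`, where no summability is needed.
-/

open Polynomial
open scoped ENNReal

theorem Polynomial.natDegree_add_trichotomy {R : Type*} [Semiring R] (p q : R[X]) :
    (p.natDegree = q.natDegree ∧ (p + q).natDegree ≤ p.natDegree) ∨
    (q.natDegree < p.natDegree ∧ (p + q).natDegree = p.natDegree) ∨
    (p.natDegree < q.natDegree ∧ (p + q).natDegree = q.natDegree) := by
  rcases lt_trichotomy p.natDegree q.natDegree with h | h | h
  · exact .inr <| .inr ⟨h, natDegree_add_eq_right_of_natDegree_lt h⟩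
  · exact .inl ⟨h, (natDegree_add_le p q).trans (by rw [h, max_self])⟩
  · exact .inr <| .inl ⟨h, natDegree_add_eq_left_of_natDegree_lt h⟩

theorem exponent_le_of_ultrametric {γ ε : ℝ} {d₁ d₂ d₃ A B : ℕ} (hε : 0 ≤ ε)
    (hε₁ : ε ≤ 2 - 3 * γ) (hε₂ : ε ≤ 2 * γ - 1)
    (h₂ : (d₁ = A ∧ d₂ ≤ d₁) ∨ (A < d₁ ∧ d₂ = d₁) ∨ (d₁ < A ∧ d₂ = A))
    (h₃ : (d₁ = B ∧ d₃ ≤ d₁) ∨ (B < d₁ ∧ d₃ = d₁) ∨ (d₁ < B ∧ d₃ = B)) :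
    -γ * d₁ + -γ * d₂ + (1 - 2 * γ) * d₃ ≤ (1 - 2 * γ) * (A + B) + (-d₁ - ε * |(d₁ : ℝ) - A|) ∨
    -γ * d₁ + -γ * d₂ + (1 - 2 * γ) * d₃ ≤ (1 - 2 * γ) * (A + B) + (-d₂ - ε * |(d₂ : ℝ) - A|) ∨
    -γ * d₁ + -γ * d₂ + (1 - 2 * γ) * d₃ ≤ (1 - 2 * γ) * (A + B) + (-d₃ - ε * |(d₃ : ℝ) - B|) := by
  rcases h₂ with ⟨rfl, h₂⟩ | ⟨h₂, rfl⟩ | ⟨h₂, rfl⟩ <;>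
    rcases h₃ with ⟨rfl, h₃⟩ | ⟨h₃, rfl⟩ | ⟨h₃, rfl⟩ <;> rify at h₂ h₃
  · rcases le_total (d₂ : ℝ) d₃ with h | h
    · right; left; rw [abs_of_nonpos (by linarith)]; nlinarith
    · right; right; rw [abs_of_nonpos (by linarith)]; nlinarith
  · right; left; rw [abs_of_nonpos (by linarith)]; nlinarith
  · right; left; rw [abs_of_nonpos (by linarith)]; nlinarith
  · right; right; rw [abs_of_nonpos (by linarith)]; nlinarith
  · right; left; rw [abs_of_nonneg (by linarith)]; nlinarith
  · right; left; rw [abs_of_nonneg (by linarith)]; nlinarith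
  · right; right; rw [abs_of_nonpos (by linarith)]
    nlinarith [mul_nonneg (by linarith : (0:ℝ) ≤ 1 - γ) (by linarith : (0:ℝ) ≤ d₂ - d₃),
      mul_nonneg (by linarith : 0 ≤ 1 - γ - ε) (by linarith : (0:ℝ) ≤ d₁ - d₃)]
  · left; rw [abs_of_nonpos (by linarith)]; nlinarith
  · left; rw [abs_of_nonpos (by linarith)]; nlinarith

theorem ENNReal.tsum_pow_dist_le (r : ℝ≥0∞) (N : ℕ) :
    ∑' m : ℕ, r ^ Nat.dist m N ≤ 2 * (1 - r)⁻¹ := by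
  have hinj : Function.Injective fun m : ℕ => (Nat.dist m N, decide (m ≤ N)) := by
    intro m₁ m₂ h
    simp only [Prod.mk.injEq, decide_eq_decide, Nat.dist] at h
    omega
  calc ∑' m : ℕ, r ^ Nat.dist m N
      ≤ ∑' p : ℕ × Bool, r ^ p.1 := ENNReal.tsum_comp_le_tsum_of_injective hinj _
    _ = 2 * ∑' k : ℕ, r ^ k := by
      rw [ENNReal.tsum_prod (f := fun k (_ : Bool) => r ^ k), ← ENNReal.tsum_mul_left]
      simp [two_mul]
    _ = 2 * (1 - r)⁻¹ := by rw [ENNReal.tsum_geometric]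

theorem ENNReal.tsum_rpow_neg_mul_abs_sub_le (Q : ℝ≥0∞) (ε : ℝ) (N : ℕ) :
    ∑' m : ℕ, Q ^ (-(ε * |(m : ℝ) - N|)) ≤ 2 * (1 - Q ^ (-ε))⁻¹ := by
  have hdist (m : ℕ) : |(m : ℝ) - N| = Nat.dist m N := by
    rcases le_total m N with h | h
    · rw [Nat.dist_eq_sub_of_le h, abs_of_nonpos (by simpa using h), Nat.cast_sub h, neg_sub]
    · rw [Nat.dist_eq_sub_of_le_right h, abs_of_nonneg (by simpa using h), Nat.cast_sub h]
  simp_rw [hdist, ← neg_mul, ENNReal.rpow_mul, ENNReal.rpow_natCast]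
  exact tsum_pow_dist_le _ N

theorem ENNReal.tsum_toReal_le {α : Type*} {f : α → ℝ≥0∞} {B : ℝ≥0∞} (hB : B ≠ ⊤)
    (h : ∑' x, f x ≤ B) : ∑' x, (f x).toReal ≤ B.toReal := by
  rw [← ENNReal.tsum_toReal_eq fun x => ne_top_of_le_ne_top hB ((ENNReal.le_tsum x).trans h)]
  exact ENNReal.toReal_mono hB h

noncomputable def peakWeight (Q : ℝ≥0∞) (ε : ℝ) (N d : ℕ) : ℝ≥0∞ :=
  Q ^ (-(d : ℝ) - ε * |(d : ℝ) - N|)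

section FiniteField

variable {F : Type*} [Field F] [Fintype F]

theorem Polynomial.encard_setOf_natDegree_le (n : ℕ) :
    {p : F[X] | p.natDegree ≤ n}.encard = Fintype.card F ^ (n + 1) := by
  have hset : {p : F[X] | p.natDegree ≤ n} = (degreeLT F (n + 1) : Set F[X]) := by
    ext p
    simp [degreeLT_succ_eq_degreeLE, mem_degreeLE, natDegree_le_iff_degree_le]
  rw [hset, Set.encard, SetLike.coe_sort_coe, ENat.card_congr (degreeLTEquiv F (n + 1)).toEquiv]
  simp

theorem Polynomial.tsum_comp_natDegree_le (g : ℕ → ℝ≥0∞) :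
    ∑' p : F[X], g p.natDegree ≤ ∑' n, (Fintype.card F : ℝ≥0∞) ^ (n + 1) * g n := by
  rw [← ENNReal.tsum_fiberwise _ natDegree]
  refine ENNReal.tsum_le_tsum fun n => ?_
  calc ∑' p : natDegree ⁻¹' {n}, g (p : F[X]).natDegree
      = ∑' _ : natDegree ⁻¹' {n}, g n := tsum_congr fun p => by rw [p.2]
    _ = (natDegree ⁻¹' {n} : Set F[X]).encard * g n := ENNReal.tsum_set_const _ _
    _ ≤ {p : F[X] | p.natDegree ≤ n}.encard * g n := by
      gcongr
      exact fun p (hp : p.natDegree = n) => hp.le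
    _ = (Fintype.card F : ℝ≥0∞) ^ (n + 1) * g n := by
      rw [encard_setOf_natDegree_le]
      push_cast
      rfl

theorem Polynomial.tsum_peakWeight_natDegree_add_le (ε : ℝ) (N : ℕ) (c : F[X]) :
    ∑' x : F[X], peakWeight (Fintype.card F) ε N (x + c).natDegree ≤
      Fintype.card F * (2 * (1 - (Fintype.card F : ℝ≥0∞) ^ (-ε))⁻¹) := by
  set Q : ℝ≥0∞ := (Fintype.card F : ℝ≥0∞)
  have hQ₀ : Q ≠ 0 := by simp [Q]
  have hQ : Q ≠ ⊤ := ENNReal.natCast_ne_top _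
  calc ∑' x : F[X], peakWeight Q ε N (x + c).natDegree
      = ∑' x : F[X], peakWeight Q ε N x.natDegree :=
        (Equiv.addRight c).tsum_eq fun x => peakWeight Q ε N x.natDegree
    _ ≤ ∑' n, Q ^ (n + 1) * peakWeight Q ε N n := tsum_comp_natDegree_le _
    _ = Q * ∑' n : ℕ, Q ^ (-(ε * |(n : ℝ) - N|)) := by
      rw [← ENNReal.tsum_mul_left]
      refine tsum_congr fun n => ?_
      rw [peakWeight, pow_succ', mul_assoc, ← ENNReal.rpow_natCast, ← ENNReal.rpow_add _ _ hQ₀ hQ]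
      ring_nf
    _ ≤ Q * (2 * (1 - Q ^ (-ε))⁻¹) := by
      gcongr
      exact ENNReal.tsum_rpow_neg_mul_abs_sub_le Q ε N

theorem Polynomial.rpow_natDegree_mul_le {γ ε : ℝ} (hε : 0 ≤ ε) (hε₁ : ε ≤ 2 - 3 * γ)
    (hε₂ : ε ≤ 2 * γ - 1) (x a b : F[X]) :
    (Fintype.card F : ℝ≥0∞) ^ (-γ * x.natDegree) *
        (Fintype.card F : ℝ≥0∞) ^ (-γ * (x + a).natDegree) *
        (Fintype.card F : ℝ≥0∞) ^ ((1 - 2 * γ) * (x + b).natDegree) ≤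
      (Fintype.card F : ℝ≥0∞) ^ ((1 - 2 * γ) * (a.natDegree + b.natDegree)) *
        (peakWeight (Fintype.card F) ε a.natDegree x.natDegree +
          peakWeight (Fintype.card F) ε a.natDegree (x + a).natDegree +
          peakWeight (Fintype.card F) ε b.natDegree (x + b).natDegree) := by
  set Q : ℝ≥0∞ := (Fintype.card F : ℝ≥0∞)
  have hQ₁ : 1 ≤ Q := by simp [Q, Nat.one_le_iff_ne_zero]
  have hQ₀ : Q ≠ 0 := by simp [Q]
  have hQ : Q ≠ ⊤ := ENNReal.natCast_ne_top _
  have hmono {e t f : ℝ} (h : e ≤ t + f) : Q ^ e ≤ Q ^ t * Q ^ f :=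
    (ENNReal.rpow_le_rpow_of_exponent_le hQ₁ h).trans_eq (ENNReal.rpow_add _ _ hQ₀ hQ)
  rw [← ENNReal.rpow_add _ _ hQ₀ hQ, ← ENNReal.rpow_add _ _ hQ₀ hQ]
  rcases exponent_le_of_ultrametric hε hε₁ hε₂ (natDegree_add_trichotomy x a)
      (natDegree_add_trichotomy x b) with h | h | h <;>
    refine (hmono h).trans (mul_le_mul_right ?_ _)
  · exact le_add_right (le_add_right le_rfl)
  · exact le_add_right (le_add_left le_rfl)
  · exact le_add_left le_rfl

theorem Polynomial.tsum_rpow_natDegree_mul_le {γ ε : ℝ} (hε : 0 ≤ ε) (hε₁ : ε ≤ 2 - 3 * γ)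
    (hε₂ : ε ≤ 2 * γ - 1) (a b : F[X]) :
    ∑' x : F[X], (Fintype.card F : ℝ≥0∞) ^ (-γ * x.natDegree) *
        (Fintype.card F : ℝ≥0∞) ^ (-γ * (x + a).natDegree) *
        (Fintype.card F : ℝ≥0∞) ^ ((1 - 2 * γ) * (x + b).natDegree) ≤
      3 * (Fintype.card F * (2 * (1 - (Fintype.card F : ℝ≥0∞) ^ (-ε))⁻¹)) *
        (Fintype.card F : ℝ≥0∞) ^ ((1 - 2 * γ) * (a.natDegree + b.natDegree)) := by
  set K := (Fintype.card F : ℝ≥0∞) * (2 * (1 - (Fintype.card F : ℝ≥0∞) ^ (-ε))⁻¹)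
  calc _ ≤ ∑' x : F[X], (Fintype.card F : ℝ≥0∞) ^ ((1 - 2 * γ) * (a.natDegree + b.natDegree)) *
          (peakWeight (Fintype.card F) ε a.natDegree x.natDegree +
            peakWeight (Fintype.card F) ε a.natDegree (x + a).natDegree +
            peakWeight (Fintype.card F) ε b.natDegree (x + b).natDegree) :=
        ENNReal.tsum_le_tsum fun x => rpow_natDegree_mul_le hε hε₁ hε₂ x a b
    _ ≤ (Fintype.card F : ℝ≥0∞) ^ ((1 - 2 * γ) * (a.natDegree + b.natDegree)) * (K + K + K) := by
      rw [ENNReal.tsum_mul_left, ENNReal.tsum_add, ENNReal.tsum_add]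
      gcongr
      · simpa using tsum_peakWeight_natDegree_add_le ε a.natDegree (0 : F[X])
      · exact tsum_peakWeight_natDegree_add_le ε _ a
      · exact tsum_peakWeight_natDegree_add_le ε _ b
    _ = _ := by ring

end FiniteField

/-- Lemma (basic 2, first part): for `1/2 < γ < 2/3`, there is a constant
`C = C(γ, q)` such that for all nonzero `a, b ∈ F_q[t]`,
`∑_{x ≠ 0} q^{-γ deg x} q^{-γ deg(x+a)} q^{(1-2γ) deg(x+b)}
  ≤ C q^{(1-2γ)(deg a + deg b)}`
(terms with `x + a = 0` or `x + b = 0` contribute zero). -/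
theorem stmt_12 (F : Type*) [Field F] [Fintype F] (γ : ℝ)
    (hγ1 : 1 / 2 < γ) (hγ2 : γ < 2 / 3) :
    ∃ C : ℝ, 0 < C ∧ ∀ (a b : Polynomial F), a ≠ 0 → b ≠ 0 →
      ∑' x : {x : Polynomial F // x ≠ 0 ∧ x + a ≠ 0 ∧ x + b ≠ 0},
          (Fintype.card F : ℝ) ^ (-γ * ((x : Polynomial F).natDegree : ℝ)) *
            (Fintype.card F : ℝ) ^ (-γ * (((x : Polynomial F) + a).natDegree : ℝ)) *
            (Fintype.card F : ℝ) ^ ((1 - 2 * γ) * (((x : Polynomial F) + b).natDegree : ℝ))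
        ≤ C * (Fintype.card F : ℝ) ^
            ((1 - 2 * γ) * ((a.natDegree : ℝ) + (b.natDegree : ℝ))) := by
  set Q : ℝ≥0∞ := (Fintype.card F : ℝ≥0∞)
  set ε := min (2 - 3 * γ) (2 * γ - 1)
  have hε : 0 < ε := lt_min (by linarith) (by linarith)
  set K : ℝ≥0∞ := 3 * (Q * (2 * (1 - Q ^ (-ε))⁻¹))
  have hK : K ≠ ⊤ := by
    have hQ : 1 < Q := by simpa [Q] using Fintype.one_lt_card (α := F)
    have : 1 - Q ^ (-ε) ≠ 0 :=
      (tsub_pos_of_lt (ENNReal.rpow_lt_one_of_one_lt_of_neg hQ (neg_lt_zero.2 hε))).ne'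
    simp [K, Q, this, ENNReal.mul_eq_top]
  refine ⟨K.toReal + 1, by positivity, fun a b _ _ => ?_⟩
  have hreal (e : ℝ) : (Fintype.card F : ℝ) ^ e = (Q ^ e).toReal := by
    rw [← ENNReal.toReal_rpow, ENNReal.toReal_natCast]
  simp_rw [hreal, ← ENNReal.toReal_mul]
  calc _ ≤ (K * Q ^ ((1 - 2 * γ) * ((a.natDegree : ℝ) + b.natDegree))).toReal :=
        ENNReal.tsum_toReal_le (by finiteness)
          ((ENNReal.tsum_comp_le_tsum_of_injective Subtype.val_injective _).trans
            (tsum_rpow_natDegree_mul_le hε.le (min_le_left _ _) (min_le_right _ _) a b))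
    _ ≤ _ := by
      rw [ENNReal.toReal_mul]
      gcongr
      linarith
end

section
/- Let H and K be positive integers. If a family F of vectors in (F_q[t])^H contains no vectorial sunflower of K petals, then |F| ≤ H! · ((H^2 - H + 1)·K)^H. -/
/-!
Fix a set `J` of "active" coordinates outside of which all vectors of the family agree, and take
a maximal subfamily `M` whose vectors have pairwise disjoint entries on `J`. Such an `M` is a
sunflower with kernel outside `J`, so `|M| < K`. By maximality every vector shares an entry with
`M`, so it has some coordinate `i ∈ J` carrying one of the fewer than `K |J|` entries `e` of `M`
on `J`. Fixing `v i = e` removes `i` from the active coordinates, so induction on `|J|` gives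
`|F| ≤ K^|J| (|J|!)²`, and `(H!)² ≤ H! H^H ≤ H! (H² - H + 1)^H`.
-/

/-- `T` is a vectorial sunflower of `K` petals: `K` distinct vectors such that,
for some set `I` of coordinates, all vectors agree on the coordinates in `I`,
and after deleting the coordinates in `I` the resulting vectors have pairwise
disjoint sets of entries. -/
def IsVectorialSunflower {F : Type*} [Field F] {H : ℕ} (K : ℕ)
    (T : Finset (Fin H → Polynomial F)) : Prop :=
  T.card = K ∧ ∃ I : Set (Fin H),
    (∀ v ∈ T, ∀ w ∈ T, ∀ i ∈ I, v i = w i) ∧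
    (∀ v ∈ T, ∀ w ∈ T, v ≠ w → ∀ i ∉ I, ∀ j ∉ I, v i ≠ w j)

open Finset

namespace Finset

theorem exists_pairwise_not_rel_forall_exists_rel {α : Type*} (s : Finset α)
    (r : α → α → Prop) (hrefl : ∀ x, r x x) (hsymm : ∀ x y, r x y → r y x) :
    ∃ M ⊆ s, (M : Set α).Pairwise (fun a b => ¬ r a b) ∧
      ∀ x ∈ s, ∃ y ∈ M, r x y := by
  classical
  obtain ⟨M, hM, hMmax⟩ := exists_max_image
    (s.powerset.filter fun M : Finset α => (M : Set α).Pairwise fun a b => ¬ r a b) card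
    ⟨∅, by simp⟩
  obtain ⟨hMs, hMpair⟩ := mem_filter.1 hM
  refine ⟨M, mem_powerset.1 hMs, hMpair, fun x hx => ?_⟩
  by_contra! hxM
  have hxnM : x ∉ M := fun h => hxM x h (hrefl x)
  have hxMpair : (↑(insert x M) : Set α).Pairwise fun a b => ¬ r a b := by
    rw [coe_insert]
    exact hMpair.insert_of_notMem hxnM fun y hy => ⟨hxM y hy, fun h => hxM y hy (hsymm _ _ h)⟩
  have := hMmax (insert x M)
    (mem_filter.2 ⟨mem_powerset.2 (insert_subset hx (mem_powerset.1 hMs)), hxMpair⟩)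
  rw [card_insert_of_notMem hxnM] at this
  omega

theorem card_le_of_forall_exists_apply_mem {ι α : Type*} [DecidableEq α]
    (Fam : Finset (ι → α)) (J : Finset ι) (E : Finset α) (b : ℕ)
    (hcover : ∀ v ∈ Fam, ∃ i ∈ J, v i ∈ E)
    (hfiber : ∀ i ∈ J, ∀ e ∈ E, #{v ∈ Fam | v i = e} ≤ b) :
    #Fam ≤ #J * #E * b := by
  classical
  have hsub : Fam ⊆ (J ×ˢ E).biUnion fun q => {v ∈ Fam | v q.1 = q.2} := by
    intro v hv
    obtain ⟨i, hi, hvi⟩ := hcover v hv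
    exact mem_biUnion.2 ⟨(i, v i), mem_product.2 ⟨hi, hvi⟩, mem_filter.2 ⟨hv, rfl⟩⟩
  calc #Fam ≤ _ := card_le_card hsub
    _ ≤ #(J ×ˢ E) * b :=
        card_biUnion_le_card_mul _ _ _ fun q hq =>
          hfiber q.1 (mem_product.1 hq).1 q.2 (mem_product.1 hq).2
    _ = #J * #E * b := by rw [card_product]

end Finset

section Sunflower

variable {ι α : Type*}

def IsSunflower (T : Set (ι → α)) : Prop :=
  ∃ I : Set ι, (∀ v ∈ T, ∀ w ∈ T, ∀ i ∈ I, v i = w i) ∧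
    T.Pairwise fun v w => Disjoint (v '' Iᶜ) (w '' Iᶜ)

theorem IsSunflower.mono {S T : Set (ι → α)} (hST : S ⊆ T) (hT : IsSunflower T) :
    IsSunflower S :=
  let ⟨I, hagree, hdisj⟩ := hT
  ⟨I, fun v hv w hw => hagree v (hST hv) w (hST hw), hdisj.mono hST⟩

theorem card_le_pow_mul_factorial_sq_of_isSunflower_card_lt (K : ℕ)
    (J : Finset ι) (Fam : Finset (ι → α))
    (hagree : ∀ v ∈ Fam, ∀ w ∈ Fam, ∀ i ∉ J, v i = w i)
    (hsun : ∀ T ⊆ Fam, IsSunflower (T : Set (ι → α)) → #T < K) :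
    #Fam ≤ K ^ #J * (#J).factorial ^ 2 := by
  classical
  induction hJ : #J generalizing J Fam with
  | zero =>
    obtain rfl := card_eq_zero.1 hJ
    simpa using card_le_one.2 fun v hv w hw =>
      funext fun i => hagree v hv w hw i (notMem_empty i)
  | succ n ih =>
    have hJne : J.Nonempty := card_pos.1 (hJ ▸ n.succ_pos)
    obtain ⟨M, hMFam, hMdisj, hMdom⟩ := Fam.exists_pairwise_not_rel_forall_exists_rel
      (fun v w => ¬ Disjoint (v '' J) (w '' J))
      (fun v => by simpa using hJne.ne_empty) (fun v w h => fun h' => h h'.symm)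
    simp only [not_not] at hMdisj
    have hMK : #M ≤ K := by
      refine (hsun M hMFam ⟨(J : Set ι)ᶜ, ?_, by simpa using hMdisj⟩).le
      exact fun v hv w hw i hi => hagree v (hMFam hv) w (hMFam hw) i hi
    set E := M.biUnion fun w => J.image w
    have hE : #E ≤ K * (n + 1) := by
      calc #E ≤ #M * (n + 1) := card_biUnion_le_card_mul _ _ _ fun w _ => hJ ▸ card_image_le
        _ ≤ K * (n + 1) := Nat.mul_le_mul_right _ hMK
    have hcover : ∀ v ∈ Fam, ∃ i ∈ J, v i ∈ E := by
      intro v hv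
      obtain ⟨w, hwM, hvw⟩ := hMdom v hv
      obtain ⟨_, ⟨i, hi, rfl⟩, ⟨j, hj, hji⟩⟩ := Set.not_disjoint_iff.1 hvw
      exact ⟨i, hi, mem_biUnion.2 ⟨w, hwM, mem_image.2 ⟨j, hj, hji⟩⟩⟩
    have hfiber : ∀ i ∈ J, ∀ e ∈ E, #{v ∈ Fam | v i = e} ≤ K ^ n * n.factorial ^ 2 := by
      intro i hi e _
      have hJi : #(J.erase i) = n := by rw [card_erase_of_mem hi, hJ]; rfl
      refine hJi ▸ ih (J.erase i) {v ∈ Fam | v i = e} ?_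
        (fun T hT => hsun T (hT.trans (filter_subset _ _))) hJi
      simp only [mem_filter, mem_erase, not_and']
      intro v ⟨hv, hvi⟩ w ⟨hw, hwi⟩ k hk
      by_cases hki : k = i
      · rw [hki, hvi, hwi]
      · exact hagree v hv w hw k fun hkJ => hk hkJ hki
    calc #Fam ≤ #J * #E * (K ^ n * n.factorial ^ 2) :=
          card_le_of_forall_exists_apply_mem Fam J E _ hcover hfiber
      _ ≤ (n + 1) * (K * (n + 1)) * (K ^ n * n.factorial ^ 2) := by rw [hJ]; gcongr
      _ = K ^ (n + 1) * (n + 1).factorial ^ 2 := by rw [pow_succ, Nat.factorial_succ]; ring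

end Sunflower

theorem isVectorialSunflower_of_isSunflower {F : Type*} [Field F] {H K : ℕ}
    (T : Finset (Fin H → Polynomial F)) (hT : IsSunflower (T : Set (Fin H → Polynomial F)))
    (hK : #T = K) : IsVectorialSunflower K T :=
  let ⟨I, hagree, hdisj⟩ := hT
  ⟨hK, I, hagree, fun _ hv _ hw hvw i hi j hj hij =>
    Set.disjoint_left.1 (hdisj hv hw hvw) ⟨i, hi, rfl⟩ ⟨j, hj, hij.symm⟩⟩

theorem Nat.le_sq_sub_self_add_one (n : ℕ) : n ≤ n ^ 2 - n + 1 := by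
  rcases n with _ | n
  · simp
  · have : (n + 1) ^ 2 = n * n + 2 * n + 1 := by ring
    omega

theorem stmt_14_general {F : Type*} [Field F] (H K : ℕ)
    (Fam : Finset (Fin H → Polynomial F))
    (hsun : ¬ ∃ T ⊆ Fam, IsVectorialSunflower K T) :
    Fam.card ≤ H.factorial * ((H ^ 2 - H + 1) * K) ^ H := by
  have hsmall : ∀ T ⊆ Fam, IsSunflower (T : Set (Fin H → Polynomial F)) → #T < K := by
    intro T hT hTsun
    by_contra! hKT
    obtain ⟨S, hST, hS⟩ := exists_subset_card_eq hKT
    exact hsun ⟨S, hST.trans hT, isVectorialSunflower_of_isSunflower S (hTsun.mono hST) hS⟩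
  calc #Fam ≤ K ^ H * H.factorial ^ 2 := by
        simpa using
          card_le_pow_mul_factorial_sq_of_isSunflower_card_lt K univ Fam (by simp) hsmall
    _ = H.factorial * (H.factorial * K ^ H) := by ring
    _ ≤ H.factorial * ((H ^ 2 - H + 1) ^ H * K ^ H) := by
        gcongr
        exact (Nat.factorial_le_pow H).trans
          (Nat.pow_le_pow_left (Nat.le_sq_sub_self_add_one H) H)
    _ = H.factorial * ((H ^ 2 - H + 1) * K) ^ H := by rw [mul_pow]

/-- Vectorial sunflower lemma: a family of vectors in `(F_q[t])^H` containing
no vectorial sunflower of `K` petals has at most `H!·((H² − H + 1)·K)^H`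
elements. -/
theorem stmt_14 {F : Type*} [Field F] [Fintype F] (H K : ℕ) (hH : 0 < H) (hK : 0 < K)
    (Fam : Finset (Fin H → Polynomial F))
    (hsun : ¬ ∃ T ⊆ Fam, IsVectorialSunflower K T) :
    Fam.card ≤ H.factorial * ((H ^ 2 - H + 1) * K) ^ H :=
  stmt_14_general H K Fam hsun
end
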